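/- arXiv:1210.6336 — 10 statements merged into one kernel-verified Lean document; each statement's English description precedes it below -/
import Mathlib

section
/- Let 1 ≤ p < 2 and let X be a real-valued random variable with E|X|^p < ∞. Then the series ∑_{n=1}^∞ (1/n²) (∑_{k=1}^n E[|X| · 1{k < |X|^p ≤ n}])^p converges. -/
/-!
Write `f = |X|^p`. At most `f` indices `k ≥ 1` satisfy `k < f`, so the `n`-th inner sum is at most
`∫_{f ≤ n} f^(1 + 1/p)`. Since `1 + 1/p` interpolates between the exponents `1` and `2` with weights
`1 - 1/p` and `1/p`, Hölder's inequality bounds its `p`-th power by `(E f)^(p-1) ∫_{f ≤ n} f²`.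
Finally `∑_{n ≥ f} n⁻² ≤ 2 / f`, so `∑ₙ n⁻² ∫_{f ≤ n} f² ≤ 2 E f`.
-/

open MeasureTheory Finset

theorem integral_rpow_mul_rpow_le {α : Type*} [MeasurableSpace α] {μ : Measure α}
    {u v : α → ℝ} (hu0 : 0 ≤ u) (hv0 : 0 ≤ v) (hu : Integrable u μ) (hv : Integrable v μ)
    {a b : ℝ} (ha : 0 ≤ a) (hb : 0 ≤ b) (hab : a + b = 1) :
    ∫ x, u x ^ a * v x ^ b ∂μ ≤ (∫ x, u x ∂μ) ^ a * (∫ x, v x ∂μ) ^ b := by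
  have hmeas : AEStronglyMeasurable (fun x => u x ^ a * v x ^ b) μ :=
    (hu.1.aemeasurable.pow_const a |>.mul (hv.1.aemeasurable.pow_const b)).aestronglyMeasurable
  have hnonneg (x : α) : 0 ≤ u x ^ a * v x ^ b :=
    mul_nonneg (Real.rpow_nonneg (hu0 x) a) (Real.rpow_nonneg (hv0 x) b)
  rw [integral_eq_lintegral_of_nonneg_ae (.of_forall hnonneg) hmeas,
    integral_eq_lintegral_of_nonneg_ae (.of_forall hu0) hu.1,
    integral_eq_lintegral_of_nonneg_ae (.of_forall hv0) hv.1,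
    ENNReal.toReal_rpow, ENNReal.toReal_rpow, ← ENNReal.toReal_mul]
  refine ENNReal.toReal_mono (ENNReal.mul_ne_top ?_ ?_) ?_
  · exact ENNReal.rpow_ne_top_of_nonneg ha hu.lintegral_lt_top.ne
  · exact ENNReal.rpow_ne_top_of_nonneg hb hv.lintegral_lt_top.ne
  calc ∫⁻ x, ENNReal.ofReal (u x ^ a * v x ^ b) ∂μ
      = ∫⁻ x, ENNReal.ofReal (u x) ^ a * ENNReal.ofReal (v x) ^ b ∂μ := by
        congr with x
        rw [ENNReal.ofReal_mul (Real.rpow_nonneg (hu0 x) a),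
          ENNReal.ofReal_rpow_of_nonneg (hu0 x) ha, ENNReal.ofReal_rpow_of_nonneg (hv0 x) hb]
    _ ≤ _ := ENNReal.lintegral_mul_norm_pow_le hu.1.aemeasurable.ennreal_ofReal
        hv.1.aemeasurable.ennreal_ofReal ha hb hab

theorem sum_Icc_ite_lt_le {x y : ℝ} (hx : 0 ≤ x) (hy : 0 ≤ y) (n : ℕ) :
    ∑ k ∈ Icc 1 n, (if (k : ℝ) < x then y else 0) ≤ x * y := by
  rw [← sum_filter, sum_const, nsmul_eq_mul]
  gcongr
  calc (((Icc 1 n).filter fun k : ℕ => (k : ℝ) < x).card : ℝ) ≤ (Icc 1 ⌊x⌋₊).card := by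
        gcongr
        intro k hk
        simp only [mem_filter, mem_Icc] at hk ⊢
        exact ⟨hk.1.1, Nat.le_floor hk.2.le⟩
    _ ≤ x := by simpa using Nat.floor_le hx

theorem sum_range_inv_sq_mul_ite_le {x : ℝ} (hx : 0 ≤ x) (N : ℕ) :
    ∑ n ∈ range N, ((n : ℝ) ^ 2)⁻¹ * (if x ≤ n then x ^ 2 else 0) ≤ 2 * x := by
  rcases hx.eq_or_lt with rfl | hx
  · simp
  have hceil : 0 < ⌈x⌉₊ := Nat.ceil_pos.mpr hx
  simp_rw [mul_ite, mul_zero]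
  rw [← sum_filter, ← sum_mul]
  calc (∑ n ∈ (range N).filter fun n : ℕ => x ≤ n, ((n : ℝ) ^ 2)⁻¹) * x ^ 2
      ≤ (∑ n ∈ Ioo (⌈x⌉₊ - 1) N, ((n : ℝ) ^ 2)⁻¹) * x ^ 2 := by
        gcongr
        intro n hn
        simp only [mem_filter, mem_range, mem_Ioo] at hn ⊢
        have := Nat.ceil_le.mpr hn.2
        omega
    _ ≤ 2 / ⌈x⌉₊ * x ^ 2 := by
        gcongr
        convert sum_Ioo_inv_sq_le (α := ℝ) (⌈x⌉₊ - 1) N using 3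
        push_cast [Nat.one_le_iff_ne_zero.mpr hceil.ne']
        ring
    _ ≤ 2 / x * x ^ 2 := by gcongr; exact Nat.le_ceil x
    _ = 2 * x := by field_simp

section

variable {Ω : Type*} [MeasurableSpace Ω] {μ : Measure Ω} [IsFiniteMeasure μ] {f : Ω → ℝ}

theorem integrableOn_rpow_setOf_le (hf : Measurable f) (hf0 : 0 ≤ f) {r : ℝ} (hr : 0 ≤ r)
    (c : ℝ) : IntegrableOn (fun ω => f ω ^ r) {ω | f ω ≤ c} μ := by
  refine Integrable.of_bound (hf.pow_const r).aestronglyMeasurable (c ^ r) ?_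
  filter_upwards [ae_restrict_mem (hf measurableSet_Iic)] with ω hω
  rw [Real.norm_of_nonneg (Real.rpow_nonneg (hf0 ω) r)]
  exact Real.rpow_le_rpow (hf0 ω) hω hr

theorem sum_setIntegral_rpow_le (hf : Measurable f) (hf0 : 0 ≤ f) {r : ℝ} (hr : 0 ≤ r) (n : ℕ) :
    ∑ k ∈ Icc 1 n, ∫ ω in {ω | (k : ℝ) < f ω ∧ f ω ≤ n}, f ω ^ r ∂μ ≤
      ∫ ω in {ω | f ω ≤ n}, f ω ^ (1 + r) ∂μ := by
  have hA (k : ℕ) : MeasurableSet {ω | (k : ℝ) < f ω ∧ f ω ≤ n} := hf measurableSet_Ioc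
  have hB : MeasurableSet {ω | f ω ≤ n} := hf measurableSet_Iic
  have hint (k : ℕ) : Integrable ({ω | (k : ℝ) < f ω ∧ f ω ≤ n}.indicator fun ω => f ω ^ r) μ :=
    ((integrableOn_rpow_setOf_le hf hf0 hr n).mono_set fun _ h => h.2).integrable_indicator (hA k)
  simp_rw [← integral_indicator (hA _), ← integral_indicator hB]
  rw [← integral_finsetSum _ fun k _ => hint k]
  refine integral_mono (integrable_finsetSum _ fun k _ => hint k)
    ((integrableOn_rpow_setOf_le hf hf0 (by positivity) n).integrable_indicator hB) fun ω => ?_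
  by_cases hω : f ω ≤ n
  · simp only [Set.indicator_apply, Set.mem_ofPred_eq, hω, and_true, if_true]
    rw [Real.rpow_add' (hf0 ω) (by positivity), Real.rpow_one]
    exact sum_Icc_ite_lt_le (hf0 ω) (Real.rpow_nonneg (hf0 ω) r) n
  · simp [hω]

theorem setIntegral_rpow_one_add_inv_rpow_le (hf : Measurable f) (hf0 : 0 ≤ f)
    (hfi : Integrable f μ) {p : ℝ} (hp : 1 ≤ p) (c : ℝ) :
    (∫ ω in {ω | f ω ≤ c}, f ω ^ (1 + p⁻¹) ∂μ) ^ p ≤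
      (∫ ω, f ω ∂μ) ^ (p - 1) * ∫ ω in {ω | f ω ≤ c}, f ω ^ 2 ∂μ := by
  set B := {ω | f ω ≤ c}
  have hp0 : 0 < p := by linarith
  have hsq : IntegrableOn (fun ω => f ω ^ 2) B μ := by
    simpa using integrableOn_rpow_setOf_le (μ := μ) hf hf0 zero_le_two c
  have h1 : 0 ≤ ∫ ω in B, f ω ∂μ := integral_nonneg hf0
  have h2 : 0 ≤ ∫ ω in B, f ω ^ 2 ∂μ := integral_nonneg fun ω => sq_nonneg (f ω)
  have hexp (ω : Ω) : f ω ^ (1 - p⁻¹) * (f ω ^ 2) ^ p⁻¹ = f ω ^ (1 + p⁻¹) := by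
    rw [← Real.rpow_natCast, ← Real.rpow_mul (hf0 ω),
      ← Real.rpow_add' (hf0 ω) (by ring_nf; positivity)]
    ring_nf
  have key := integral_rpow_mul_rpow_le (μ := μ.restrict B) hf0 (fun ω => sq_nonneg (f ω))
    hfi.integrableOn hsq (sub_nonneg.mpr (inv_le_one_of_one_le₀ hp)) (inv_nonneg.mpr hp0.le)
    (sub_add_cancel 1 p⁻¹)
  simp only [hexp] at key
  calc (∫ ω in B, f ω ^ (1 + p⁻¹) ∂μ) ^ p
      ≤ ((∫ ω in B, f ω ∂μ) ^ (1 - p⁻¹) * (∫ ω in B, f ω ^ 2 ∂μ) ^ p⁻¹) ^ p := by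
        gcongr
        exact integral_nonneg fun ω => Real.rpow_nonneg (hf0 ω) _
    _ = (∫ ω in B, f ω ∂μ) ^ (p - 1) * ∫ ω in B, f ω ^ 2 ∂μ := by
        rw [Real.mul_rpow (by positivity) (by positivity), ← Real.rpow_mul h1, ← Real.rpow_mul h2,
          inv_mul_cancel₀ hp0.ne', Real.rpow_one, sub_mul, one_mul, inv_mul_cancel₀ hp0.ne']
    _ ≤ (∫ ω, f ω ∂μ) ^ (p - 1) * ∫ ω in B, f ω ^ 2 ∂μ := by
        gcongr
        · exact .of_forall hf0
        · exact Measure.restrict_le_self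

theorem sum_inv_sq_mul_setIntegral_sq_le (hf : Measurable f) (hf0 : 0 ≤ f)
    (hfi : Integrable f μ) (N : ℕ) :
    ∑ n ∈ range N, ((n : ℝ) ^ 2)⁻¹ * ∫ ω in {ω | f ω ≤ n}, f ω ^ 2 ∂μ ≤ 2 * ∫ ω, f ω ∂μ := by
  have hB (n : ℕ) : MeasurableSet {ω | f ω ≤ n} := hf measurableSet_Iic
  have hint (n : ℕ) : Integrable
      (fun ω => ((n : ℝ) ^ 2)⁻¹ * {ω | f ω ≤ n}.indicator (fun ω => f ω ^ 2) ω) μ := by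
    refine Integrable.const_mul (IntegrableOn.integrable_indicator ?_ (hB n)) _
    simpa using integrableOn_rpow_setOf_le (μ := μ) hf hf0 zero_le_two n
  calc ∑ n ∈ range N, ((n : ℝ) ^ 2)⁻¹ * ∫ ω in {ω | f ω ≤ n}, f ω ^ 2 ∂μ
      = ∫ ω, ∑ n ∈ range N,
          ((n : ℝ) ^ 2)⁻¹ * {ω | f ω ≤ n}.indicator (fun ω => f ω ^ 2) ω ∂μ := by
        rw [integral_finsetSum _ fun n _ => hint n]
        simp_rw [integral_const_mul, integral_indicator (hB _)]
    _ ≤ ∫ ω, 2 * f ω ∂μ := by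
        refine integral_mono (integrable_finsetSum _ fun n _ => hint n) (hfi.const_mul 2)
          fun ω => ?_
        simpa only [Set.indicator_apply, Set.mem_ofPred_eq] using
          sum_range_inv_sq_mul_ite_le (hf0 ω) N
    _ = 2 * ∫ ω, f ω ∂μ := integral_const_mul 2 _

theorem summable_inv_sq_mul_sum_setIntegral_rpow_inv_rpow (hf : Measurable f) (hf0 : 0 ≤ f)
    (hfi : Integrable f μ) {p : ℝ} (hp : 1 ≤ p) :
    Summable fun n : ℕ => ((n : ℝ) ^ 2)⁻¹ *
      (∑ k ∈ Icc 1 n, ∫ ω in {ω | (k : ℝ) < f ω ∧ f ω ≤ n}, f ω ^ p⁻¹ ∂μ) ^ p := by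
  have hp0 : 0 < p := by linarith
  have hS (n : ℕ) : 0 ≤ ∑ k ∈ Icc 1 n, ∫ ω in {ω | (k : ℝ) < f ω ∧ f ω ≤ n}, f ω ^ p⁻¹ ∂μ :=
    sum_nonneg fun k _ => integral_nonneg fun ω => Real.rpow_nonneg (hf0 ω) _
  have hsq : Summable fun n : ℕ => ((n : ℝ) ^ 2)⁻¹ * ∫ ω in {ω | f ω ≤ n}, f ω ^ 2 ∂μ :=
    summable_of_sum_range_le (fun n => by positivity) (sum_inv_sq_mul_setIntegral_sq_le hf hf0 hfi)
  refine (hsq.mul_left ((∫ ω, f ω ∂μ) ^ (p - 1))).of_nonneg_of_le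
    (fun n => mul_nonneg (by positivity) (Real.rpow_nonneg (hS n) p)) fun n => ?_
  calc ((n : ℝ) ^ 2)⁻¹ *
        (∑ k ∈ Icc 1 n, ∫ ω in {ω | (k : ℝ) < f ω ∧ f ω ≤ n}, f ω ^ p⁻¹ ∂μ) ^ p
      ≤ ((n : ℝ) ^ 2)⁻¹ * (∫ ω in {ω | f ω ≤ n}, f ω ^ (1 + p⁻¹) ∂μ) ^ p := by
        gcongr
        · exact hS n
        · exact sum_setIntegral_rpow_le hf hf0 (inv_nonneg.mpr hp0.le) n
    _ ≤ ((n : ℝ) ^ 2)⁻¹ * ((∫ ω, f ω ∂μ) ^ (p - 1) * ∫ ω in {ω | f ω ≤ n}, f ω ^ 2 ∂μ) := by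
        gcongr
        exact setIntegral_rpow_one_add_inv_rpow_le hf hf0 hfi hp n
    _ = (∫ ω, f ω ∂μ) ^ (p - 1) * (((n : ℝ) ^ 2)⁻¹ * ∫ ω in {ω | f ω ≤ n}, f ω ^ 2 ∂μ) := by
        ring

end

theorem stmt_2_general {Ω : Type*} [MeasurableSpace Ω] (μ : Measure Ω) [IsProbabilityMeasure μ]
    (X : Ω → ℝ) (hXmeas : Measurable X) (p : ℝ) (hp1 : 1 ≤ p)
    (hXp : Integrable (fun ω => |X ω| ^ p) μ) :
    Summable (fun n : ℕ => ((n : ℝ) ^ 2)⁻¹ *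
      (∑ k ∈ Finset.Icc 1 n,
        ∫ ω in {ω | (k : ℝ) < |X ω| ^ p ∧ |X ω| ^ p ≤ (n : ℝ)}, |X ω| ∂μ) ^ p) := by
  have h := summable_inv_sq_mul_sum_setIntegral_rpow_inv_rpow (hXmeas.abs.pow_const p)
    (fun ω => Real.rpow_nonneg (abs_nonneg (X ω)) p) hXp hp1
  simpa only [Real.rpow_rpow_inv (abs_nonneg _) (by linarith : p ≠ 0)] using h

theorem stmt_2 {Ω : Type*} [MeasurableSpace Ω] (μ : Measure Ω) [IsProbabilityMeasure μ]
    (X : Ω → ℝ) (hXmeas : Measurable X) (p : ℝ) (hp1 : 1 ≤ p) (hp2 : p < 2)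
    (hXp : Integrable (fun ω => |X ω| ^ p) μ) :
    Summable (fun n : ℕ => ((n : ℝ) ^ 2)⁻¹ *
      (∑ k ∈ Finset.Icc 1 n,
        ∫ ω in {ω | (k : ℝ) < |X ω| ^ p ∧ |X ω| ^ p ≤ (n : ℝ)}, |X ω| ∂μ) ^ p) :=
  stmt_2_general μ X hXmeas p hp1 hXp
end

section
/- Let 1 ≤ p < 2 and let X be a real-valued random variable with E|X|^p < ∞. For n ≥ 1 let u_n = inf{t : P(|X| > t) < 1/n}. Then ∑_{n=1}^∞ u_n^p / n² < ∞. -/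
/-!
With `q n` the upper quantile of level `1/n` of `f = |X|` (and `q 0 = 0`), the sequence `q` is
nondecreasing and `μ {q n ≤ f} ≥ 1/n`. Cutting `f ^ p` into the layers between `q k ^ p` and
`q (k + 1) ^ p` gives `∑ₖ (q (k + 1) ^ p - q k ^ p) / (k + 1) ≤ 𝔼[f ^ p]`, and summation by parts
with `∑_{n > k} 1 / n ^ 2 ≤ 2 / (k + 1)` turns this into `∑ₙ q n ^ p / n ^ 2 ≤ 2 𝔼[f ^ p]`.
-/

open MeasureTheory Filter Set Finset Topology
open scoped ENNReal

theorem sum_ite_sub_le_of_monotone {a : ℕ → ℝ} (ha : Monotone a) {x : ℝ} (hx : a 0 ≤ x)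
    (N : ℕ) : ∑ k ∈ range N, (if a (k + 1) ≤ x then a (k + 1) - a k else 0) ≤ x - a 0 := by
  calc ∑ k ∈ range N, (if a (k + 1) ≤ x then a (k + 1) - a k else 0)
      ≤ ∑ k ∈ range N, (min x (a (k + 1)) - min x (a k)) := by
        gcongr with k
        split_ifs with h
        · rw [min_eq_right h, min_eq_right ((ha k.le_succ).trans h)]
        · exact sub_nonneg.2 (min_le_min_left x (ha k.le_succ))
    _ = min x (a N) - a 0 := by rw [sum_range_sub (fun k => min x (a k)), min_eq_right hx]
    _ ≤ x - a 0 := by gcongr; exact min_le_left _ _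

theorem summable_div_sq_of_sum_sub_div_le {a : ℕ → ℝ} (ha : Monotone a) (ha0 : a 0 = 0)
    {C : ℝ} (hC : ∀ N, ∑ k ∈ range N, (a (k + 1) - a k) / (k + 1) ≤ C) :
    Summable fun n : ℕ => a n / (n : ℝ) ^ 2 := by
  refine summable_of_sum_range_le (c := 2 * C)
    (fun n => div_nonneg (ha0 ▸ ha n.zero_le) (sq_nonneg _)) fun N => ?_
  calc ∑ n ∈ range N, a n / (n : ℝ) ^ 2
      = ∑ n ∈ range N, ∑ k ∈ range n, (a (k + 1) - a k) / (n : ℝ) ^ 2 := by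
        refine sum_congr rfl fun n _ => ?_
        rw [← sum_div, sum_range_sub, ha0, sub_zero]
    _ = ∑ k ∈ range N, (a (k + 1) - a k) * ∑ n ∈ Ioo k N, ((n : ℝ) ^ 2)⁻¹ := by
        simp_rw [range_eq_Ico, ← sum_Ico_Ico_comm', mul_sum, div_eq_mul_inv,
          Finset.Ico_add_one_left_eq_Ioo]
    _ ≤ ∑ k ∈ range N, (a (k + 1) - a k) * (2 / (k + 1)) := by
        gcongr with k
        exacts [sub_nonneg.2 (ha k.le_succ), sum_Ioo_inv_sq_le k N]
    _ = 2 * ∑ k ∈ range N, (a (k + 1) - a k) / (k + 1) := by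
        rw [mul_sum]
        exact sum_congr rfl fun k _ => by ring
    _ ≤ 2 * C := by gcongr; exact hC N

section Measure

variable {Ω : Type*} [MeasurableSpace Ω] {μ : Measure Ω}

theorem tendsto_measure_lt_atTop [IsFiniteMeasure μ] {f : Ω → ℝ} (hf : AEMeasurable f μ) :
    Tendsto (fun t : ℝ => μ {ω | t < f ω}) atTop (𝓝 0) := by
  have hempty : ⋂ t : ℝ, {ω | t < f ω} = ∅ :=
    eq_empty_of_forall_notMem fun ω hω => lt_irrefl (f ω) (mem_iInter.1 hω (f ω))
  simpa [Function.comp_def, hempty] using tendsto_measure_iInter_atTop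
    (fun t => nullMeasurableSet_lt aemeasurable_const hf)
    (fun s t hst ω (hω : t < f ω) => (hst.trans_lt hω : s < f ω)) ⟨0, measure_ne_top μ _⟩

theorem le_measure_le_of_forall_lt [IsFiniteMeasure μ] {f : Ω → ℝ} (hf : AEMeasurable f μ)
    {a : ℝ} {c : ℝ≥0∞} (h : ∀ t < a, c ≤ μ {ω | t < f ω}) : c ≤ μ {ω | a ≤ f ω} := by
  have hinter : ⋂ t : Iio a, {ω | (t : ℝ) < f ω} = {ω | a ≤ f ω} := by
    ext ω
    simpa [-Subtype.forall] using forall_lt_iff_le (a := a) (b := f ω)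
  rw [← hinter, Antitone.measure_iInter (s := fun t : Iio a => {ω | (t : ℝ) < f ω})
    (fun s t hst ω (hω : (t : ℝ) < f ω) => (Subtype.coe_le_coe.2 hst).trans_lt hω)
    (fun t => nullMeasurableSet_lt aemeasurable_const hf)
    ⟨(⟨a - 1, by simp⟩ : Iio a), measure_ne_top μ _⟩]
  exact le_iInf fun t => h t t.2

theorem sum_ofReal_sub_mul_measure_le_lintegral {h : Ω → ℝ} (hh : AEMeasurable h μ) {a : ℕ → ℝ}
    (ha : Monotone a) (ha0 : ∀ ω, a 0 ≤ h ω) (N : ℕ) :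
    ∑ k ∈ range N, ENNReal.ofReal (a (k + 1) - a k) * μ {ω | a (k + 1) ≤ h ω}
      ≤ ∫⁻ ω, ENNReal.ofReal (h ω - a 0) ∂μ := by
  have hmeas k : NullMeasurableSet {ω | a (k + 1) ≤ h ω} μ :=
    nullMeasurableSet_le aemeasurable_const hh
  simp_rw [← lintegral_indicator_const₀ (hmeas _)]
  rw [← lintegral_finsetSum' _ fun k _ => aemeasurable_const.indicator₀ (hmeas k)]
  refine lintegral_mono fun ω => ?_
  have hterm k : {ω | a (k + 1) ≤ h ω}.indicator (fun _ => ENNReal.ofReal (a (k + 1) - a k)) ω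
      = ENNReal.ofReal (if a (k + 1) ≤ h ω then a (k + 1) - a k else 0) := by
    split_ifs with hk <;> simp [hk]
  simp_rw [hterm]
  rw [← ENNReal.ofReal_sum_of_nonneg fun k _ => by
    split_ifs
    exacts [sub_nonneg.2 (ha k.le_succ), le_rfl]]
  exact ENNReal.ofReal_le_ofReal (sum_ite_sub_le_of_monotone ha (ha0 ω) N)

end Measure

noncomputable def upperQuantile {Ω : Type*} [MeasurableSpace Ω] (μ : Measure Ω) (f : Ω → ℝ)
    (n : ℕ) : ℝ :=
  sInf {t : ℝ | μ {ω | t < f ω} < (n : ℝ≥0∞)⁻¹}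

section Quantile

variable {Ω : Type*} [MeasurableSpace Ω] {μ : Measure Ω} [IsProbabilityMeasure μ] {f : Ω → ℝ}
  {φ : ℝ → ℝ}

-- At `n = 0` the level `(0 : ℝ≥0∞)⁻¹ = ⊤` makes the set all of `ℝ`, whose `sInf` is the junk
-- value `0`.
theorem upperQuantile_zero : upperQuantile μ f 0 = 0 := by
  simp [upperQuantile, measure_lt_top]

theorem nonneg_of_measure_lt_lt_inv (hf : 0 ≤ f) {n : ℕ} (hn : n ≠ 0) {t : ℝ}
    (ht : μ {ω | t < f ω} < (n : ℝ≥0∞)⁻¹) : 0 ≤ t := by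
  by_contra! ht0
  have huniv : {ω | t < f ω} = univ := eq_univ_of_forall fun ω => ht0.trans_le (hf ω)
  rw [huniv, measure_univ] at ht
  exact ht.not_ge (ENNReal.inv_le_one.2 (Nat.one_le_cast.2 (Nat.one_le_iff_ne_zero.2 hn)))

theorem upperQuantile_nonneg (hf : 0 ≤ f) (n : ℕ) : 0 ≤ upperQuantile μ f n := by
  rcases eq_or_ne n 0 with rfl | hn
  · rw [upperQuantile_zero]
  · exact Real.sInf_nonneg fun t ht => nonneg_of_measure_lt_lt_inv hf hn ht

theorem inv_le_measure_lt_of_lt_upperQuantile (hf : 0 ≤ f) {n : ℕ} (hn : n ≠ 0) {t : ℝ}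
    (ht : t < upperQuantile μ f n) : (n : ℝ≥0∞)⁻¹ ≤ μ {ω | t < f ω} :=
  not_lt.1 fun h => ht.not_ge <|
    csInf_le ⟨0, fun _ hs => nonneg_of_measure_lt_lt_inv hf hn hs⟩ h

theorem inv_le_measure_upperQuantile_le (hf0 : 0 ≤ f) (hf : AEMeasurable f μ) {n : ℕ}
    (hn : n ≠ 0) : (n : ℝ≥0∞)⁻¹ ≤ μ {ω | upperQuantile μ f n ≤ f ω} :=
  le_measure_le_of_forall_lt hf fun _ ht => inv_le_measure_lt_of_lt_upperQuantile hf0 hn ht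

theorem upperQuantile_mono (hf0 : 0 ≤ f) (hf : AEMeasurable f μ) :
    Monotone (upperQuantile μ f) := by
  intro m n hmn
  rcases eq_or_ne m 0 with rfl | hm
  · exact upperQuantile_zero.trans_le (upperQuantile_nonneg hf0 n)
  have hn : n ≠ 0 := by omega
  have hne : {t : ℝ | μ {ω | t < f ω} < (n : ℝ≥0∞)⁻¹}.Nonempty :=
    ((tendsto_measure_lt_atTop hf).eventually_lt_const
      (ENNReal.inv_pos.2 (ENNReal.natCast_ne_top n))).exists
  refine csInf_le_csInf ⟨0, fun _ hs => nonneg_of_measure_lt_lt_inv hf0 hm hs⟩ hne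
    (ofPred_subset_ofPred.2 fun _ ht => ht.trans_le ?_)
  gcongr

theorem monotone_comp_upperQuantile (hf0 : 0 ≤ f) (hf : AEMeasurable f μ)
    (hφ : MonotoneOn φ (Ici 0)) : Monotone fun n => φ (upperQuantile μ f n) :=
  fun m n hmn =>
    hφ (upperQuantile_nonneg hf0 m) (upperQuantile_nonneg hf0 n) (upperQuantile_mono hf0 hf hmn)

theorem sum_sub_comp_upperQuantile_div_le_integral (hf0 : 0 ≤ f) (hf : AEMeasurable f μ)
    (hφ : MonotoneOn φ (Ici 0)) (hφ0 : φ 0 = 0) (hφf : Integrable (fun ω => φ (f ω)) μ)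
    (N : ℕ) :
    ∑ k ∈ range N, (φ (upperQuantile μ f (k + 1)) - φ (upperQuantile μ f k)) / (k + 1)
      ≤ ∫ ω, φ (f ω) ∂μ := by
  set a := fun n => φ (upperQuantile μ f n)
  have ha : Monotone a := monotone_comp_upperQuantile hf0 hf hφ
  have hd k : 0 ≤ a (k + 1) - a k := sub_nonneg.2 (ha k.le_succ)
  have ha0 : a 0 = 0 := by simp only [a, upperQuantile_zero, hφ0]
  have hφf0 ω : 0 ≤ φ (f ω) := hφ0 ▸ hφ self_mem_Ici (hf0 ω) (hf0 ω)
  have hlevel k : (((k + 1 : ℕ) : ℝ≥0∞))⁻¹ ≤ μ {ω | a (k + 1) ≤ φ (f ω)} :=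
    (inv_le_measure_upperQuantile_le hf0 hf k.succ_ne_zero).trans <| measure_mono fun ω hω =>
      hφ (upperQuantile_nonneg hf0 _) ((upperQuantile_nonneg hf0 _).trans hω) hω
  rw [← ENNReal.ofReal_le_ofReal_iff (integral_nonneg hφf0),
    ofReal_integral_eq_lintegral_ofReal hφf (ae_of_all _ hφf0),
    ENNReal.ofReal_sum_of_nonneg fun k _ => div_nonneg (hd k) k.cast_add_one_pos.le]
  calc ∑ k ∈ range N, ENNReal.ofReal ((a (k + 1) - a k) / (k + 1))
      ≤ ∑ k ∈ range N, ENNReal.ofReal (a (k + 1) - a k) * μ {ω | a (k + 1) ≤ φ (f ω)} := by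
        gcongr with k
        rw [ENNReal.ofReal_div_of_pos k.cast_add_one_pos, div_eq_mul_inv]
        gcongr
        exact_mod_cast hlevel k
    _ ≤ ∫⁻ ω, ENNReal.ofReal (φ (f ω) - a 0) ∂μ :=
        sum_ofReal_sub_mul_measure_le_lintegral hφf.aemeasurable ha (fun ω => ha0 ▸ hφf0 ω) N
    _ = ∫⁻ ω, ENNReal.ofReal (φ (f ω)) ∂μ := by rw [ha0]; simp only [sub_zero]

theorem summable_comp_upperQuantile_div_sq (hf0 : 0 ≤ f) (hf : AEMeasurable f μ)
    (hφ : MonotoneOn φ (Ici 0)) (hφ0 : φ 0 = 0) (hφf : Integrable (fun ω => φ (f ω)) μ) :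
    Summable fun n : ℕ => φ (upperQuantile μ f n) / (n : ℝ) ^ 2 :=
  summable_div_sq_of_sum_sub_div_le
    (monotone_comp_upperQuantile hf0 hf hφ)
    (by rw [upperQuantile_zero, hφ0])
    (sum_sub_comp_upperQuantile_div_le_integral hf0 hf hφ hφ0 hφf)

end Quantile

theorem stmt_3_general {Ω : Type*} [MeasurableSpace Ω] (μ : Measure Ω) [IsProbabilityMeasure μ]
    (X : Ω → ℝ) (p : ℝ) (hp1 : 1 ≤ p)
    (hXp : Integrable (fun ω => |X ω| ^ p) μ) (u : ℕ → ℝ)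
    (hu : ∀ n : ℕ, 1 ≤ n →
      u n = sInf {t : ℝ | μ {ω | t < |X ω|} < (n : ENNReal)⁻¹}) :
    Summable (fun n : ℕ => u n ^ p / (n : ℝ) ^ 2) := by
  have hp : 0 < p := zero_lt_one.trans_le hp1
  have hX : AEMeasurable (fun ω => |X ω|) μ :=
    (hXp.aemeasurable.pow_const p⁻¹).congr
      (ae_of_all _ fun ω => Real.rpow_rpow_inv (abs_nonneg (X ω)) hp.ne')
  refine (summable_comp_upperQuantile_div_sq (fun ω => abs_nonneg (X ω)) hX
    (Real.monotoneOn_rpow_Ici_of_exponent_nonneg hp.le) (Real.zero_rpow hp.ne') hXp).congr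
    fun n => ?_
  rcases eq_or_ne n 0 with rfl | hn
  · simp
  · rw [hu n (Nat.one_le_iff_ne_zero.2 hn), upperQuantile]

theorem stmt_3 {Ω : Type*} [MeasurableSpace Ω] (μ : Measure Ω) [IsProbabilityMeasure μ]
    (X : Ω → ℝ) (p : ℝ) (hp1 : 1 ≤ p) (hp2 : p < 2)
    (hXp : Integrable (fun ω => |X ω| ^ p) μ) (u : ℕ → ℝ)
    (hu : ∀ n : ℕ, 1 ≤ n →
      u n = sInf {t : ℝ | μ {ω | t < |X ω|} < (n : ENNReal)⁻¹}) :
    Summable (fun n : ℕ => u n ^ p / (n : ℝ) ^ 2) :=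
  stmt_3_general μ X p hp1 hXp u hu
end

section
/- Let 1 ≤ p < 2, δ > 0, and let X be a real-valued random variable with E|X|^p < ∞. Then ∑_{n=1}^∞ E[|X|^{p+δ} · 1{|X|^p ≤ n}] / n^{1 + δ/p} < ∞. -/
/-!
With `Y = |X|^p` and `q = δ/p` the `n`-th term is `E[Y^(1+q) 1{Y ≤ n}] / n^(1+q)`. Exchanging the
(partial) sum with the expectation, it suffices to show `∑_{n ≥ y} (y/n)^(1+q) ≤ (1 + 1/q) y`. This
follows at `m = ⌈y⌉ ≥ max y 1` from `m^(-(1+q)) ≤ m^(-q)` and the integral comparison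
`∑_{n > m} n^(-(1+q)) ≤ ∫_m^∞ x^(-(1+q)) dx = m^(-q) / q`.
-/

open MeasureTheory Real Finset

lemma sum_range_rpow_neg_le_div {q x₀ : ℝ} (hq : 0 < q) (hx₀ : 0 < x₀) (K : ℕ) :
    ∑ k ∈ range K, (x₀ + (k + 1 : ℕ)) ^ (-(1 + q)) ≤ x₀ ^ (-q) / q := by
  have hanti : AntitoneOn (fun x : ℝ => x ^ (-(1 + q))) (Set.Icc x₀ (x₀ + K)) :=
    fun x hx y _ hxy => rpow_le_rpow_of_nonpos (hx₀.trans_le hx.1) hxy (by linarith)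
  have hzero : (0 : ℝ) ∉ Set.uIcc x₀ (x₀ + K) := by
    rw [Set.uIcc_of_le (by linarith [K.cast_nonneg (α := ℝ)])]
    exact fun h => hx₀.not_ge h.1
  refine hanti.sum_le_integral.trans ?_
  rw [integral_rpow (Or.inr ⟨by linarith, hzero⟩), show -(1 + q) + 1 = -q by ring,
    show ∀ a b : ℝ, (a - b) / -q = (b - a) / q by intros; ring]
  have hend : 0 ≤ (x₀ + K) ^ (-q) := rpow_nonneg (by positivity) _
  gcongr
  linarith

lemma sum_Ico_rpow_neg_le {q : ℝ} (hq : 0 < q) {m : ℕ} (hm : 1 ≤ m) (N : ℕ) :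
    ∑ n ∈ Ico m N, (n : ℝ) ^ (-(1 + q)) ≤ (1 + 1 / q) * (m : ℝ) ^ (-q) := by
  have hm' : (1 : ℝ) ≤ m := by exact_mod_cast hm
  have hpos : 0 ≤ (m : ℝ) ^ (-q) := rpow_nonneg (by positivity) _
  rw [sum_Ico_eq_sum_range]
  rcases Nat.eq_zero_or_eq_succ_pred (N - m) with hK | hK
  · rw [hK, sum_range_zero]
    positivity
  rw [hK, sum_range_succ']
  have tail := sum_range_rpow_neg_le_div hq (by positivity : (0 : ℝ) < m) (N - m).pred
  have head : (m : ℝ) ^ (-(1 + q)) ≤ (m : ℝ) ^ (-q) := rpow_le_rpow_of_exponent_le hm' (by linarith)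
  push_cast at tail ⊢
  rw [add_zero]
  linarith [show (1 + 1 / q) * (m : ℝ) ^ (-q) = (m : ℝ) ^ (-q) + (m : ℝ) ^ (-q) / q by ring]

lemma sum_ite_rpow_div_rpow_le {q y : ℝ} (hq : 0 < q) (hy : 0 ≤ y) (N : ℕ) :
    ∑ n ∈ range N, (if y ≤ n then y ^ (1 + q) else 0) / (n : ℝ) ^ (1 + q) ≤ (1 + 1 / q) * y := by
  rcases hy.eq_or_lt with rfl | hy
  · simp [zero_rpow (by linarith : 1 + q ≠ 0)]
  set m := ⌈y⌉₊
  have hm : 1 ≤ m := Nat.one_le_ceil_iff.mpr hy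
  have hfilter : (range N).filter (fun n : ℕ => y ≤ n) = Ico m N := by
    ext n
    simp only [mem_filter, mem_range, mem_Ico, m, Nat.ceil_le]
    tauto
  have hterm : ∀ n ∈ Ico m N,
      y ^ (1 + q) / (n : ℝ) ^ (1 + q) = y ^ (1 + q) * (n : ℝ) ^ (-(1 + q)) :=
    fun n _ => by rw [rpow_neg n.cast_nonneg, div_eq_mul_inv]
  simp_rw [ite_div, zero_div]
  rw [← sum_filter, hfilter, sum_congr rfl hterm, ← mul_sum]
  calc y ^ (1 + q) * ∑ n ∈ Ico m N, (n : ℝ) ^ (-(1 + q))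
      ≤ y ^ (1 + q) * ((1 + 1 / q) * (m : ℝ) ^ (-q)) := by
        gcongr
        exact sum_Ico_rpow_neg_le hq hm N
    _ ≤ y ^ (1 + q) * ((1 + 1 / q) * y ^ (-q)) := by
        have : (m : ℝ) ^ (-q) ≤ y ^ (-q) := rpow_le_rpow_of_nonpos hy (Nat.le_ceil y) (by linarith)
        gcongr
    _ = (1 + 1 / q) * y := by
        rw [mul_left_comm, ← rpow_add hy]
        norm_num

section

variable {Ω : Type*} [MeasurableSpace Ω] {μ : Measure Ω} {Y : Ω → ℝ}

lemma integrable_indicator_setOf_le_rpow (hY : Measurable Y) (hY0 : ∀ ω, 0 ≤ Y ω)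
    (hYi : Integrable Y μ) {q c : ℝ} (hq : 0 ≤ q) (hc : 0 ≤ c) :
    Integrable ({ω | Y ω ≤ c}.indicator fun ω => Y ω ^ (1 + q)) μ := by
  refine (hYi.const_mul (c ^ q)).mono'
    ((hY.pow_const _).indicator (measurableSet_le hY measurable_const)).aestronglyMeasurable
    (ae_of_all _ fun ω => ?_)
  have hpow : 0 ≤ Y ω ^ (1 + q) := rpow_nonneg (hY0 ω) _
  by_cases h : Y ω ≤ c
  · rw [Set.indicator_of_mem (show ω ∈ {ω | Y ω ≤ c} from h), norm_of_nonneg hpow,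
      rpow_add' (hY0 ω) (by linarith), rpow_one, mul_comm]
    exact mul_le_mul_of_nonneg_right (rpow_le_rpow (hY0 ω) h hq) (hY0 ω)
  · rw [Set.indicator_of_notMem (show ω ∉ {ω | Y ω ≤ c} from h), norm_zero]
    exact mul_nonneg (rpow_nonneg hc _) (hY0 ω)

theorem summable_setIntegral_rpow_div_rpow (hY : Measurable Y) (hY0 : ∀ ω, 0 ≤ Y ω)
    (hYi : Integrable Y μ) {q : ℝ} (hq : 0 < q) :
    Summable fun n : ℕ => (∫ ω in {ω | Y ω ≤ n}, Y ω ^ (1 + q) ∂μ) / (n : ℝ) ^ (1 + q) := by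
  have hint (n : ℕ) := integrable_indicator_setOf_le_rpow hY hY0 hYi hq.le n.cast_nonneg
  refine summable_of_sum_range_le (c := (1 + 1 / q) * ∫ ω, Y ω ∂μ)
    (fun n => div_nonneg (integral_nonneg fun ω => rpow_nonneg (hY0 ω) _) (by positivity))
    fun N => ?_
  calc ∑ n ∈ range N, (∫ ω in {ω | Y ω ≤ n}, Y ω ^ (1 + q) ∂μ) / (n : ℝ) ^ (1 + q)
      = ∫ ω, ∑ n ∈ range N,
          {ω | Y ω ≤ n}.indicator (fun ω => Y ω ^ (1 + q)) ω / (n : ℝ) ^ (1 + q) ∂μ := by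
        rw [integral_finsetSum _ fun n _ => (hint n).div_const _]
        refine sum_congr rfl fun n _ => ?_
        rw [integral_div, integral_indicator (measurableSet_le hY measurable_const)]
    _ ≤ ∫ ω, (1 + 1 / q) * Y ω ∂μ :=
        integral_mono (integrable_finsetSum _ fun n _ => (hint n).div_const _)
          (hYi.const_mul _) fun ω => by
            simpa only [Set.indicator_apply, Set.mem_ofPred_eq] using
              sum_ite_rpow_div_rpow_le hq (hY0 ω) N
    _ = (1 + 1 / q) * ∫ ω, Y ω ∂μ := integral_const_mul _ _

end

theorem stmt_4_general {Ω : Type*} [MeasurableSpace Ω] (μ : Measure Ω)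
    (X : Ω → ℝ) (hXmeas : Measurable X) (p δ : ℝ) (hp1 : 1 ≤ p)
    (hδ : 0 < δ) (hXp : Integrable (fun ω => |X ω| ^ p) μ) :
    Summable (fun n : ℕ =>
      (∫ ω in {ω | |X ω| ^ p ≤ (n : ℝ)}, |X ω| ^ (p + δ) ∂μ) / (n : ℝ) ^ (1 + δ / p)) := by
  have hp : 0 < p := by linarith
  have hpow (ω : Ω) : |X ω| ^ (p + δ) = (|X ω| ^ p) ^ (1 + δ / p) := by
    rw [← rpow_mul (abs_nonneg _), mul_add, mul_one, mul_div_cancel₀ _ hp.ne']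
  simp_rw [hpow]
  exact summable_setIntegral_rpow_div_rpow (by fun_prop) (fun ω => by positivity) hXp
    (by positivity)

theorem stmt_4 {Ω : Type*} [MeasurableSpace Ω] (μ : Measure Ω) [IsProbabilityMeasure μ]
    (X : Ω → ℝ) (hXmeas : Measurable X) (p δ : ℝ) (hp1 : 1 ≤ p) (hp2 : p < 2)
    (hδ : 0 < δ) (hXp : Integrable (fun ω => |X ω| ^ p) μ) :
    Summable (fun n : ℕ =>
      (∫ ω in {ω | |X ω| ^ p ≤ (n : ℝ)}, |X ω| ^ (p + δ) ∂μ) / (n : ℝ) ^ (1 + δ / p)) :=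
  stmt_4_general μ X hXmeas p δ hp1 hδ hXp
end

section
/- Let 1 < p < 2 and let X be a real-valued random variable with E|X|^p < ∞. Then ∑_{n=1}^∞ (E[|X| · 1{|X|^p > n}])^p / n^{2-p} < ∞. -/
/-!
On `{|X|^p > t}` one has `|X| ≤ t^(1/p - 1) |X|^p`, so `b t := E[|X|; |X|^p > t]` satisfies
`b t ≤ t^(1/p - 1) E|X|^p`. Spending this bound on `p - 1` of the `p` factors of `(b n)^p` leaves
`(b n)^p / n^(2-p) ≤ (E|X|^p)^(p-1) n^(-1/p) b n`, and exchanging sum and expectation,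
`∑ n^(-1/p) b n = E[|X| ∑_{n < |X|^p} n^(-1/p)] ≤ p/(p-1) E[|X| |X|^(p-1)] = p/(p-1) E|X|^p`.
-/

open MeasureTheory ProbabilityTheory

lemma le_rpow_inv_sub_one_mul_rpow_of_lt_rpow {p t x : ℝ} (hp : 1 ≤ p) (ht : 0 < t)
    (hx : 0 ≤ x) (htx : t < x ^ p) : x ≤ t ^ (p⁻¹ - 1) * x ^ p := by
  have hp0 : p ≠ 0 := by positivity
  have hx0 : 0 < x := hx.lt_of_ne (by rintro rfl; simp [Real.zero_rpow hp0] at htx; linarith)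
  calc x = x ^ (p * (p⁻¹ - 1) + p) := by
        rw [show p * (p⁻¹ - 1) + p = 1 by field_simp; ring, Real.rpow_one]
    _ = (x ^ p) ^ (p⁻¹ - 1) * x ^ p := by rw [Real.rpow_add hx0, Real.rpow_mul hx]
    _ ≤ t ^ (p⁻¹ - 1) * x ^ p := by
        refine mul_le_mul_of_nonneg_right ?_ (Real.rpow_nonneg hx p)
        exact Real.rpow_le_rpow_of_nonpos ht htx.le (sub_nonpos.2 (inv_le_one_of_one_le₀ hp))

lemma rpow_div_rpow_two_sub_le {p n b M : ℝ} (hp : 1 ≤ p) (hn : 0 < n) (hb : 0 ≤ b)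
    (hbM : b ≤ n ^ (p⁻¹ - 1) * M) :
    b ^ p / n ^ (2 - p) ≤ M ^ (p - 1) * (n ^ (-p⁻¹) * b) := by
  have hM : 0 ≤ M := (mul_nonneg_iff_of_pos_left (Real.rpow_pos_of_pos hn _)).1 (hb.trans hbM)
  calc b ^ p / n ^ (2 - p) = b ^ (p - 1) * b / n ^ (2 - p) := by
        rw [← Real.rpow_add_one' hb (by linarith), sub_add_cancel]
    _ ≤ (n ^ (p⁻¹ - 1) * M) ^ (p - 1) * b / n ^ (2 - p) := by gcongr
    _ = M ^ (p - 1) * (n ^ ((p⁻¹ - 1) * (p - 1) - (2 - p)) * b) := by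
        rw [Real.mul_rpow (by positivity) hM, ← Real.rpow_mul hn.le,
          Real.rpow_sub hn ((p⁻¹ - 1) * (p - 1))]
        ring
    _ = M ^ (p - 1) * (n ^ (-p⁻¹) * b) := by
        rw [show (p⁻¹ - 1) * (p - 1) - (2 - p) = -p⁻¹ by field_simp; ring]

lemma mul_rpow_sub_one_le_add_one_rpow_sub_rpow {r x : ℝ} (hr0 : 0 ≤ r) (hr1 : r ≤ 1)
    (hx : 0 ≤ x) : r * (x + 1) ^ (r - 1) ≤ (x + 1) ^ r - x ^ r := by
  have hu : 0 < x + 1 := by linarith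
  have hs : -1 ≤ -(x + 1)⁻¹ := neg_le_neg (inv_le_one_of_one_le₀ (by linarith))
  have bernoulli := rpow_one_add_le_one_add_mul_self hs hr0 hr1
  rw [show 1 + -(x + 1)⁻¹ = x / (x + 1) by field_simp; ring, Real.div_rpow hx hu.le,
    div_le_iff₀ (Real.rpow_pos_of_pos hu r)] at bernoulli
  rw [Real.rpow_sub_one hu.ne']
  have : (1 + r * -(x + 1)⁻¹) * (x + 1) ^ r = (x + 1) ^ r - r * ((x + 1) ^ r / (x + 1)) := by
    ring
  linarith

lemma sum_range_ite_rpow_neg_le {s y : ℝ} (hs0 : 0 ≤ s) (hs1 : s < 1) (hy : 0 ≤ y) (N : ℕ) :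
    ∑ n ∈ Finset.range N, (if (n : ℝ) + 1 < y then ((n : ℝ) + 1) ^ (-s) else 0)
      ≤ y ^ (1 - s) / (1 - s) := by
  have hs : 0 < 1 - s := by linarith
  -- `F` is a primitive of `t ↦ t^(-s)` stopped at `y`, so the sum telescopes against it.
  set F : ℕ → ℝ := fun n => min (n : ℝ) y ^ (1 - s) / (1 - s)
  have step : ∀ n : ℕ,
      (if (n : ℝ) + 1 < y then ((n : ℝ) + 1) ^ (-s) else 0) ≤ F (n + 1) - F n := by
    intro n
    simp only [F, Nat.cast_add_one, ← sub_div]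
    split_ifs with hny
    · rw [min_eq_left hny.le, min_eq_left (by linarith), le_div_iff₀ hs, mul_comm]
      simpa using mul_rpow_sub_one_le_add_one_rpow_sub_rpow hs.le (by linarith) n.cast_nonneg
    · have hmin : min (n : ℝ) y ≤ min ((n : ℝ) + 1) y := min_le_min_right _ (by linarith)
      have hmono := Real.rpow_le_rpow (le_min n.cast_nonneg hy) hmin hs.le
      exact div_nonneg (by linarith) hs.le
  calc _ ≤ ∑ n ∈ Finset.range N, (F (n + 1) - F n) := Finset.sum_le_sum fun n _ => step n
    _ = F N - F 0 := Finset.sum_range_sub F N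
    _ ≤ y ^ (1 - s) / (1 - s) := by
        simp only [F, Nat.cast_zero, min_eq_left hy, Real.zero_rpow hs.ne', zero_div, sub_zero]
        gcongr
        exact min_le_right _ _

lemma sum_range_ite_rpow_neg_inv_mul_le {p x : ℝ} (hp : 1 < p) (hx : 0 ≤ x) (N : ℕ) :
    ∑ n ∈ Finset.range N, (if (n : ℝ) + 1 < x ^ p then ((n : ℝ) + 1) ^ (-p⁻¹) * x else 0)
      ≤ p / (p - 1) * x ^ p := by
  have hp0 : 0 < p := by linarith
  calc _ = (∑ n ∈ Finset.range N,
          if (n : ℝ) + 1 < x ^ p then ((n : ℝ) + 1) ^ (-p⁻¹) else 0) * x := by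
        rw [Finset.sum_mul]
        refine Finset.sum_congr rfl fun n _ => ?_
        split_ifs <;> simp
    _ ≤ (x ^ p) ^ (1 - p⁻¹) / (1 - p⁻¹) * x := by
        gcongr
        exact sum_range_ite_rpow_neg_le (by positivity) (inv_lt_one_of_one_lt₀ hp)
          (by positivity) N
    _ = p / (p - 1) * x ^ p := by
        rw [← Real.rpow_mul hx, mul_sub, mul_one, mul_inv_cancel₀ hp0.ne', div_mul_eq_mul_div,
          ← Real.rpow_add_one' hx (by linarith), sub_add_cancel]
        field_simp

section TailIntegral

variable {Ω : Type*} [MeasurableSpace Ω] {μ : Measure Ω} {X : Ω → ℝ} {p : ℝ}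

lemma measurableSet_lt_abs_rpow (hX : Measurable X) (t : ℝ) :
    MeasurableSet {ω | t < |X ω| ^ p} :=
  measurableSet_lt measurable_const (by fun_prop)

lemma integrableOn_abs_of_lt_abs_rpow (hX : Measurable X) (hp : 1 ≤ p)
    (hXp : Integrable (fun ω => |X ω| ^ p) μ) {t : ℝ} (ht : 0 < t) :
    IntegrableOn (fun ω => |X ω|) {ω | t < |X ω| ^ p} μ := by
  refine Integrable.mono' (hXp.integrableOn.const_mul (t ^ (p⁻¹ - 1)))
    hX.abs.aestronglyMeasurable.restrict ?_
  refine ae_restrict_of_forall_mem (measurableSet_lt_abs_rpow hX t) fun ω hω => ?_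
  rw [Real.norm_eq_abs, abs_abs]
  exact le_rpow_inv_sub_one_mul_rpow_of_lt_rpow hp ht (abs_nonneg _) hω

lemma setIntegral_abs_le_of_lt_abs_rpow (hX : Measurable X) (hp : 1 ≤ p)
    (hXp : Integrable (fun ω => |X ω| ^ p) μ) {t : ℝ} (ht : 0 < t) :
    ∫ ω in {ω | t < |X ω| ^ p}, |X ω| ∂μ ≤ t ^ (p⁻¹ - 1) * ∫ ω, |X ω| ^ p ∂μ :=
  calc ∫ ω in {ω | t < |X ω| ^ p}, |X ω| ∂μ
      ≤ ∫ ω in {ω | t < |X ω| ^ p}, t ^ (p⁻¹ - 1) * |X ω| ^ p ∂μ :=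
        setIntegral_mono_on (integrableOn_abs_of_lt_abs_rpow hX hp hXp ht)
          (hXp.integrableOn.const_mul _) (measurableSet_lt_abs_rpow hX t) fun ω hω =>
            le_rpow_inv_sub_one_mul_rpow_of_lt_rpow hp ht (abs_nonneg _) hω
    _ = t ^ (p⁻¹ - 1) * ∫ ω in {ω | t < |X ω| ^ p}, |X ω| ^ p ∂μ :=
        integral_const_mul _ _
    _ ≤ t ^ (p⁻¹ - 1) * ∫ ω, |X ω| ^ p ∂μ :=
        mul_le_mul_of_nonneg_left
          (setIntegral_le_integral hXp (ae_of_all _ fun ω => by positivity)) (by positivity)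

lemma sum_range_rpow_neg_inv_mul_setIntegral_abs_le (hX : Measurable X) (hp : 1 < p)
    (hXp : Integrable (fun ω => |X ω| ^ p) μ) (N : ℕ) :
    ∑ n ∈ Finset.range N,
        ((n : ℝ) + 1) ^ (-p⁻¹) * ∫ ω in {ω | (n : ℝ) + 1 < |X ω| ^ p}, |X ω| ∂μ
      ≤ p / (p - 1) * ∫ ω, |X ω| ^ p ∂μ := by
  set S : ℕ → Set Ω := fun n => {ω | (n : ℝ) + 1 < |X ω| ^ p}
  have hS : ∀ n, MeasurableSet (S n) := fun n => measurableSet_lt_abs_rpow hX _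
  have hint :
      ∀ n, Integrable ((S n).indicator fun ω => ((n : ℝ) + 1) ^ (-p⁻¹) * |X ω|) μ :=
    fun n => IntegrableOn.integrable_indicator
      ((integrableOn_abs_of_lt_abs_rpow hX hp.le hXp (by positivity)).const_mul _) (hS n)
  calc _ = ∫ ω, ∑ n ∈ Finset.range N,
          (S n).indicator (fun ω => ((n : ℝ) + 1) ^ (-p⁻¹) * |X ω|) ω ∂μ := by
        rw [integral_finsetSum _ fun n _ => hint n]
        refine Finset.sum_congr rfl fun n _ => ?_
        rw [integral_indicator (hS n), integral_const_mul]
    _ ≤ ∫ ω, p / (p - 1) * |X ω| ^ p ∂μ := by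
        refine integral_mono (integrable_finsetSum _ fun n _ => hint n)
          (hXp.const_mul _) fun ω => ?_
        simpa only [S, Set.indicator_apply, Set.mem_ofPred_eq]
          using sum_range_ite_rpow_neg_inv_mul_le hp (abs_nonneg (X ω)) N
    _ = p / (p - 1) * ∫ ω, |X ω| ^ p ∂μ := integral_const_mul _ _

end TailIntegral

theorem stmt_5_general {Ω : Type*} [MeasurableSpace Ω] (μ : Measure Ω)
    (X : Ω → ℝ) (hXmeas : Measurable X) (p : ℝ) (hp1 : 1 < p)
    (hXp : Integrable (fun ω => |X ω| ^ p) μ) :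
    Summable (fun n : ℕ =>
      (∫ ω in {ω | (n : ℝ) < |X ω| ^ p}, |X ω| ∂μ) ^ p / (n : ℝ) ^ (2 - p)) := by
  set M := ∫ ω, |X ω| ^ p ∂μ
  set b : ℝ → ℝ := fun t => ∫ ω in {ω | t < |X ω| ^ p}, |X ω| ∂μ
  have hb : ∀ t, 0 ≤ b t := fun t => integral_nonneg fun ω => abs_nonneg _
  have hweighted : Summable fun n : ℕ => ((n : ℝ) + 1) ^ (-p⁻¹) * b (n + 1) :=
    summable_of_sum_range_le (fun n => mul_nonneg (by positivity) (hb _))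
      (sum_range_rpow_neg_inv_mul_setIntegral_abs_le hXmeas hp1 hXp)
  rw [← summable_nat_add_iff 1]
  refine Summable.of_nonneg_of_le (fun n => div_nonneg (by positivity) (by positivity))
    (fun n => ?_) (hweighted.mul_left (M ^ (p - 1)))
  push_cast
  exact rpow_div_rpow_two_sub_le hp1.le (by positivity) (hb _)
    (setIntegral_abs_le_of_lt_abs_rpow hXmeas hp1.le hXp (by positivity))

theorem stmt_5 {Ω : Type*} [MeasurableSpace Ω] (μ : Measure Ω) [IsProbabilityMeasure μ]
    (X : Ω → ℝ) (hXmeas : Measurable X) (p : ℝ) (hp1 : 1 < p) (hp2 : p < 2)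
    (hXp : Integrable (fun ω => |X ω| ^ p) μ) :
    Summable (fun n : ℕ =>
      (∫ ω in {ω | (n : ℝ) < |X ω| ^ p}, |X ω| ∂μ) ^ p / (n : ℝ) ^ (2 - p)) :=
  stmt_5_general μ X hXmeas p hp1 hXp
end

section
/- Let X be a nonnegative random variable with ∫_0^∞ P(X > t)^{1/p} dt < ∞ for some p > 1, and let X_1, X_2, ... be i.i.d. copies of X. Then ∑_{n=1}^∞ n^{-1-1/p} E[max_{1 ≤ k ≤ n} X_k] < ∞. -/
/-!
Write `s = 1 / p` and `G t = P(X > t)`. The union bound gives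
`P(max_{k ≤ n} X_k > t) ≤ min 1 (n * G t)`, so by the layer-cake formula and Tonelli
`∑ n^(-1-s) E[max_{k ≤ n} X_k] ≤ ∫_0^∞ ∑ n^(-1-s) min 1 (n * G t) dt`.
The inner sum is at most `C_s * (G t)^s`: split it at `N = ⌈1 / G t⌉`; the head
`G t * ∑_{n ≤ N} n^(-s)` and the tail `∑_{n > N} n^(-1-s)` are both of order `N^(-s) ≈ (G t)^s`.
-/

open MeasureTheory ProbabilityTheory Set
open scoped ENNReal

namespace Real

lemma sub_one_rpow_le {σ x : ℝ} (hσ0 : 0 ≤ σ) (hσ1 : σ ≤ 1) (hx : 1 ≤ x) :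
    (x - 1) ^ σ ≤ x ^ σ - σ * x ^ (σ - 1) := by
  have hx0 : 0 < x := one_pos.trans_le hx
  have hx' : -1 ≤ -x⁻¹ := neg_le_neg (inv_le_one_of_one_le₀ hx)
  calc (x - 1) ^ σ = x ^ σ * (1 + -x⁻¹) ^ σ := by
        rw [← mul_rpow hx0.le (by linarith), mul_add, mul_one, mul_neg, mul_inv_cancel₀ hx0.ne',
          ← sub_eq_add_neg]
    _ ≤ x ^ σ * (1 + σ * -x⁻¹) := by gcongr; exact rpow_one_add_le_one_add_mul_self hx' hσ0 hσ1
    _ = x ^ σ - σ * x ^ (σ - 1) := by rw [rpow_sub_one hx0.ne']; ring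

lemma sum_range_rpow_neg_le {s : ℝ} (hs0 : 0 < s) (hs1 : s < 1) (N : ℕ) :
    ∑ n ∈ Finset.range (N + 1), (n : ℝ) ^ (-s) ≤ (N : ℝ) ^ (1 - s) / (1 - s) := by
  rw [le_div_iff₀ (by linarith)]
  induction N with
  | zero => simp [zero_rpow (neg_ne_zero.2 hs0.ne'), zero_rpow (by linarith : 1 - s ≠ 0)]
  | succ N ih =>
    have step := sub_one_rpow_le (σ := 1 - s) (x := N + 1) (by linarith) (by linarith) (by simp)
    rw [add_sub_cancel_right, sub_sub_cancel_left] at step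
    rw [Finset.sum_range_succ, add_mul]
    push_cast
    linarith

lemma tsum_rpow_nat_add_le {s : ℝ} (hs : 0 < s) {N : ℕ} (hN : 0 < N) :
    ∑' k : ℕ, ((k + N + 1 : ℕ) : ℝ) ^ (-1 - s) ≤ (N : ℝ) ^ (-s) / s := by
  have hN' : (0 : ℝ) < N := Nat.cast_pos.2 hN
  have hexp : -1 - s < -1 := by linarith
  calc ∑' k : ℕ, ((k + N + 1 : ℕ) : ℝ) ^ (-1 - s)
      ≤ ∫ u in Ioi (N : ℝ), u ^ (-1 - s) :=
        ((antitoneOn_rpow_Ioi_of_exponent_nonpos (by linarith)).mono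
          fun u hu => hN'.trans_le hu).tsum_comp_add_le_integral N
          (integrableOn_Ioi_rpow_of_lt hexp hN')
          fun u hu => rpow_nonneg (hN'.trans hu).le _
    _ = (N : ℝ) ^ (-s) / s := by
        rw [integral_Ioi_rpow_of_lt hexp hN', show -1 - s + 1 = -s by ring, neg_div_neg_eq]

lemma summable_rpow_mul_min {s x : ℝ} (hs : 0 < s) (hx : 0 ≤ x) :
    Summable fun n : ℕ => (n : ℝ) ^ (-1 - s) * min 1 (n * x) :=
  (summable_nat_rpow.2 (by linarith)).of_nonneg_of_le
    (fun n => by positivity) fun n => mul_le_of_le_one_right (by positivity) (min_le_left _ _)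

lemma sum_range_rpow_mul_min_le {s x : ℝ} (hs0 : 0 < s) (hs1 : s < 1) (hx : 0 ≤ x) (N : ℕ) :
    ∑ n ∈ Finset.range (N + 1), (n : ℝ) ^ (-1 - s) * min 1 (n * x)
      ≤ N * (N : ℝ) ^ (-s) * x / (1 - s) := by
  have hterm (n : ℕ) : (n : ℝ) ^ (-1 - s) * min 1 (n * x) ≤ (n : ℝ) ^ (-s) * x := by
    rcases n.eq_zero_or_pos with rfl | hn
    · simp only [CharP.cast_eq_zero, zero_mul, min_eq_right zero_le_one, mul_zero]
      positivity
    calc (n : ℝ) ^ (-1 - s) * min 1 (n * x) ≤ (n : ℝ) ^ (-1 - s) * (n * x) := by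
          gcongr; exact min_le_right _ _
      _ = (n : ℝ) ^ (-s) * x := by
          rw [← mul_assoc, ← rpow_add_one (Nat.cast_pos.2 hn).ne']; ring_nf
  calc ∑ n ∈ Finset.range (N + 1), (n : ℝ) ^ (-1 - s) * min 1 (n * x)
      ≤ (∑ n ∈ Finset.range (N + 1), (n : ℝ) ^ (-s)) * x := by
        rw [Finset.sum_mul]; exact Finset.sum_le_sum fun n _ => hterm n
    _ ≤ (N : ℝ) ^ (1 - s) / (1 - s) * x := by gcongr; exact sum_range_rpow_neg_le hs0 hs1 N
    _ = N * (N : ℝ) ^ (-s) * x / (1 - s) := by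
        rcases N.eq_zero_or_pos with rfl | hN
        · simp [zero_rpow (by linarith : 1 - s ≠ 0)]
        rw [sub_eq_add_neg, rpow_add (Nat.cast_pos.2 hN), rpow_one]; ring

lemma tsum_rpow_mul_min_le {s : ℝ} (hs0 : 0 < s) (hs1 : s < 1) {x : ℝ} (hx0 : 0 < x)
    (hx1 : x ≤ 1) :
    ∑' n : ℕ, (n : ℝ) ^ (-1 - s) * min 1 (n * x) ≤ (2 / (1 - s) + 1 / s) * x ^ s := by
  set N := ⌈x⁻¹⌉₊
  have hN : 0 < N := Nat.ceil_pos.2 (inv_pos.2 hx0)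
  have hxN : x⁻¹ ≤ N := Nat.le_ceil _
  have hNx : (N : ℝ) ≤ 2 / x := by
    have := Nat.ceil_lt_add_one (inv_nonneg.2 hx0.le)
    have := one_le_inv_iff₀.2 ⟨hx0, hx1⟩
    rw [div_eq_mul_inv]
    linarith
  have hNs : (N : ℝ) ^ (-s) ≤ x ^ s := by
    calc (N : ℝ) ^ (-s) ≤ x⁻¹ ^ (-s) := rpow_le_rpow_of_nonpos (by positivity) hxN (by linarith)
      _ = x ^ s := by rw [inv_rpow hx0.le, rpow_neg hx0.le, inv_inv]
  have head : ∑ n ∈ Finset.range (N + 1), (n : ℝ) ^ (-1 - s) * min 1 (n * x)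
      ≤ 2 / (1 - s) * x ^ s := by
    have : 0 < 1 - s := by linarith
    calc ∑ n ∈ Finset.range (N + 1), (n : ℝ) ^ (-1 - s) * min 1 (n * x)
        ≤ N * (N : ℝ) ^ (-s) * x / (1 - s) := sum_range_rpow_mul_min_le hs0 hs1 hx0.le N
      _ ≤ 2 / x * x ^ s * x / (1 - s) := by gcongr
      _ = 2 / (1 - s) * x ^ s := by field_simp
  have tail : ∑' k : ℕ, ((k + (N + 1) : ℕ) : ℝ) ^ (-1 - s) * min 1 ((k + (N + 1) : ℕ) * x)
      ≤ 1 / s * x ^ s := by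
    calc ∑' k : ℕ, ((k + (N + 1) : ℕ) : ℝ) ^ (-1 - s) * min 1 ((k + (N + 1) : ℕ) * x)
        ≤ ∑' k : ℕ, ((k + N + 1 : ℕ) : ℝ) ^ (-1 - s) :=
          ((summable_nat_add_iff (N + 1)).2 (summable_rpow_mul_min hs0 hx0.le)).tsum_le_tsum
            (fun k => mul_le_of_le_one_right (by positivity) (min_le_left _ _))
            ((summable_nat_add_iff (N + 1)).2 (summable_nat_rpow.2 (by linarith)))
      _ ≤ (N : ℝ) ^ (-s) / s := tsum_rpow_nat_add_le hs0 hN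
      _ ≤ 1 / s * x ^ s := by rw [one_div_mul_eq_div]; gcongr
  rw [← (summable_rpow_mul_min hs0 hx0.le).sum_add_tsum_nat_add (N + 1), add_mul]
  exact add_le_add head tail

lemma exists_mem_lt_of_lt_biSup {ι : Type*} {s : Finset ι} {f : ι → ℝ} {t : ℝ}
    (ht : 0 ≤ t) (h : t < ⨆ i ∈ s, f i) : ∃ i ∈ s, t < f i := by
  by_contra! hf
  exact h.not_ge (Real.iSup_le (fun i => Real.iSup_le (hf i) ht) ht)

end Real

lemma ENNReal.tsum_ofReal_rpow_mul_min_le {s : ℝ} (hs0 : 0 < s) (hs1 : s < 1) {y : ℝ≥0∞}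
    (hy : y ≤ 1) :
    ∑' n : ℕ, ENNReal.ofReal ((n : ℝ) ^ (-1 - s)) * min 1 (n * y)
      ≤ ENNReal.ofReal (2 / (1 - s) + 1 / s) * y ^ s := by
  obtain ⟨x, hx0, rfl⟩ : ∃ x : ℝ, 0 ≤ x ∧ ENNReal.ofReal x = y :=
    ⟨y.toReal, ENNReal.toReal_nonneg, ENNReal.ofReal_toReal (ne_top_of_le_ne_top one_ne_top hy)⟩
  rcases hx0.eq_or_lt with rfl | hx0
  · simp
  have hx1 : x ≤ 1 := by simpa using (ENNReal.ofReal_le_one.1 hy)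
  have hterm (n : ℕ) : ENNReal.ofReal ((n : ℝ) ^ (-1 - s)) * min 1 (n * ENNReal.ofReal x)
      = ENNReal.ofReal ((n : ℝ) ^ (-1 - s) * min 1 (n * x)) := by
    rw [ENNReal.ofReal_mul (by positivity), ENNReal.ofReal_min, ENNReal.ofReal_one,
      ENNReal.ofReal_mul (by positivity), ENNReal.ofReal_natCast]
  rw [tsum_congr hterm, ← ENNReal.ofReal_tsum_of_nonneg (fun n => by positivity)
      (Real.summable_rpow_mul_min hs0 hx0.le), ENNReal.ofReal_rpow_of_pos hx0,
    ← ENNReal.ofReal_mul (add_nonneg (div_nonneg zero_le_two (by linarith)) (by positivity))]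
  exact ENNReal.ofReal_le_ofReal (Real.tsum_rpow_mul_min_le hs0 hs1 hx0 hx1)

lemma measure_lt_biSup_le_sum {Ω ι : Type*} [MeasurableSpace Ω] (μ : Measure Ω)
    (X : ι → Ω → ℝ) (s : Finset ι) {t : ℝ} (ht : 0 ≤ t) :
    μ {ω | t < ⨆ i ∈ s, X i ω} ≤ ∑ i ∈ s, μ {ω | t < X i ω} :=
  (measure_mono fun ω hω => by simpa using Real.exists_mem_lt_of_lt_biSup ht hω).trans
    (measure_biUnion_finset_le s _)

lemma tsum_rpow_mul_lintegral_le {Ω : Type*} [MeasurableSpace Ω] {μ : Measure Ω}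
    [IsProbabilityMeasure μ] {s : ℝ} (hs0 : 0 < s) (hs1 : s < 1) {Y : ℕ → Ω → ℝ}
    (hY0 : ∀ n, 0 ≤ᵐ[μ] Y n) (hYm : ∀ n, AEMeasurable (Y n) μ) {G : ℝ → ℝ≥0∞}
    (hG : ∀ t, G t ≤ 1) (hYG : ∀ n, ∀ t > 0, μ {ω | t < Y n ω} ≤ n * G t) :
    ∑' n : ℕ, ENNReal.ofReal ((n : ℝ) ^ (-1 - s)) * ∫⁻ ω, ENNReal.ofReal (Y n ω) ∂μ
      ≤ ENNReal.ofReal (2 / (1 - s) + 1 / s) * ∫⁻ t in Ioi 0, G t ^ s := by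
  have hmeas (n : ℕ) : Measurable fun t : ℝ => μ {ω | t < Y n ω} :=
    Antitone.measurable fun _ _ hab => measure_mono fun _ hω => hab.trans_lt hω
  calc ∑' n : ℕ, ENNReal.ofReal ((n : ℝ) ^ (-1 - s)) * ∫⁻ ω, ENNReal.ofReal (Y n ω) ∂μ
      = ∑' n : ℕ, ∫⁻ t in Ioi 0, ENNReal.ofReal ((n : ℝ) ^ (-1 - s)) * μ {ω | t < Y n ω} := by
        refine tsum_congr fun n => ?_
        rw [lintegral_eq_lintegral_meas_lt μ (hY0 n) (hYm n),
          lintegral_const_mul' _ _ ENNReal.ofReal_ne_top]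
    _ = ∫⁻ t in Ioi 0, ∑' n : ℕ, ENNReal.ofReal ((n : ℝ) ^ (-1 - s)) * μ {ω | t < Y n ω} :=
        (lintegral_tsum fun n => ((hmeas n).const_mul _).aemeasurable).symm
    _ ≤ ∫⁻ t in Ioi 0, ENNReal.ofReal (2 / (1 - s) + 1 / s) * G t ^ s :=
        setLIntegral_mono' measurableSet_Ioi fun t ht =>
          (ENNReal.tsum_le_tsum fun n => mul_le_mul_right (le_min prob_le_one (hYG n t ht)) _).trans
            (ENNReal.tsum_ofReal_rpow_mul_min_le hs0 hs1 (hG t))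
    _ = ENNReal.ofReal (2 / (1 - s) + 1 / s) * ∫⁻ t in Ioi 0, G t ^ s :=
        lintegral_const_mul' _ _ ENNReal.ofReal_ne_top

theorem stmt_8_general {Ω : Type*} [MeasurableSpace Ω] (μ : Measure Ω) [IsProbabilityMeasure μ]
    (X : ℕ → Ω → ℝ)
    (hident : ∀ n, IdentDistrib (X n) (X 0) μ μ)
    (hXnonneg : ∀ n ω, 0 ≤ X n ω) (p : ℝ) (hp : 1 < p)
    (hint : ∫⁻ t in Set.Ioi (0 : ℝ), (μ {ω | t < X 0 ω}) ^ (1 / p) < ⊤) :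
    Summable (fun n : ℕ => (n : ℝ) ^ (-(1 : ℝ) - 1 / p) *
      ∫ ω, (⨆ k ∈ Finset.Icc 1 n, X k ω) ∂μ) := by
  set M : ℕ → Ω → ℝ := fun n ω => ⨆ k ∈ Finset.Icc 1 n, X k ω
  have hM0 (n : ℕ) : 0 ≤ᵐ[μ] M n :=
    ae_of_all _ fun ω => Real.iSup_nonneg fun k => Real.iSup_nonneg fun _ => hXnonneg k ω
  have hMm (n : ℕ) : AEMeasurable (M n) μ :=
    AEMeasurable.iSup fun k => AEMeasurable.iSup fun _ => (hident k).aemeasurable_fst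
  have hMX (n : ℕ) (t : ℝ) (ht : t > 0) : μ {ω | t < M n ω} ≤ n * μ {ω | t < X 0 ω} := by
    calc μ {ω | t < M n ω} ≤ ∑ k ∈ Finset.Icc 1 n, μ {ω | t < X k ω} :=
          measure_lt_biSup_le_sum μ X _ ht.le
      _ = ∑ k ∈ Finset.Icc 1 n, μ {ω | t < X 0 ω} :=
          Finset.sum_congr rfl fun k _ => (hident k).measure_mem_eq measurableSet_Ioi
      _ = n * μ {ω | t < X 0 ω} := by simp
  have hfin := (tsum_rpow_mul_lintegral_le (by positivity) ((div_lt_one (by linarith)).2 hp)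
    hM0 hMm (fun _ => prob_le_one) hMX).trans_lt (ENNReal.mul_lt_top ENNReal.ofReal_lt_top hint)
  refine (ENNReal.summable_toReal hfin.ne).congr fun n => ?_
  rw [ENNReal.toReal_mul, ENNReal.toReal_ofReal (by positivity),
    ← integral_eq_lintegral_of_nonneg_ae (hM0 n) (hMm n).aestronglyMeasurable]

theorem stmt_8 {Ω : Type*} [MeasurableSpace Ω] (μ : Measure Ω) [IsProbabilityMeasure μ]
    (X : ℕ → Ω → ℝ) (hXmeas : ∀ n, Measurable (X n))
    (hindep : iIndepFun X μ)
    (hident : ∀ n, IdentDistrib (X n) (X 0) μ μ)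
    (hXnonneg : ∀ n ω, 0 ≤ X n ω) (p : ℝ) (hp : 1 < p)
    (hint : ∫⁻ t in Set.Ioi (0 : ℝ), (μ {ω | t < X 0 ω}) ^ (1 / p) < ⊤) :
    Summable (fun n : ℕ => (n : ℝ) ^ (-(1 : ℝ) - 1 / p) *
      ∫ ω, (⨆ k ∈ Finset.Icc 1 n, X k ω) ∂μ) :=
  stmt_8_general μ X hident hXnonneg p hp hint
end

section
/- Let 1 ≤ q < p < 2 and let X be a real-valued random variable satisfying ∫_0^∞ P(|X|^q > t)^{q/p} dt < ∞. For n ≥ 1, let u_n = inf{t : P(|X| > t) < 1/n}. Then ∑_{n=1}^∞ n^{-q/p} ∫_{u_n^q}^∞ P(|X|^q > t) dt < ∞. -/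
/-!
Write `G t = μ {|X|^q > t}`, `a n = u (n + 1) ^ q` and `r = q / p < 1`. By definition of the
quantile, `G t ≤ 1 / (n + 1)` as soon as `t > a n`. By Tonelli the series equals
`∫ ∑_{n : a n < t} (n + 1)^(-r) G t dt`, and the inner sum runs over at most `1 / G t` indices,
so it is at most `(1 / G t)^(1 - r) / (1 - r) · G t = G(t)^r / (1 - r)`, whose integral is finite.
-/

open MeasureTheory Filter Topology Finset
open scoped ENNReal

namespace Real

theorem mul_add_one_rpow_sub_one_le_sub {σ x : ℝ} (hσ0 : 0 ≤ σ) (hσ1 : σ ≤ 1) (hx : 0 ≤ x) :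
    σ * (x + 1) ^ (σ - 1) ≤ (x + 1) ^ σ - x ^ σ := by
  have hy : 0 < x + 1 := by linarith
  -- Bernoulli's inequality for `(1 - 1 / (x + 1)) ^ σ`, multiplied out by `(x + 1) ^ σ`
  have hs : -1 ≤ -(x + 1)⁻¹ := neg_le_neg (inv_le_one_of_one_le₀ (by linarith))
  have hbern := rpow_one_add_le_one_add_mul_self hs hσ0 hσ1
  rw [show 1 + -(x + 1)⁻¹ = x / (x + 1) by field_simp; ring, div_rpow hx hy.le,
    div_le_iff₀ (rpow_pos_of_pos hy σ)] at hbern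
  rw [rpow_sub_one hy.ne']
  have hexpand :
      (1 + σ * -(x + 1)⁻¹) * (x + 1) ^ σ = (x + 1) ^ σ - σ * ((x + 1) ^ σ / (x + 1)) := by
    field_simp
    ring
  linarith

theorem sum_range_add_one_rpow_neg_le {r : ℝ} (hr0 : 0 ≤ r) (hr1 : r < 1) (N : ℕ) :
    ∑ n ∈ range N, ((n : ℝ) + 1) ^ (-r) ≤ (N : ℝ) ^ (1 - r) / (1 - r) := by
  rw [le_div_iff₀ (by linarith), sum_mul]
  calc ∑ n ∈ range N, ((n : ℝ) + 1) ^ (-r) * (1 - r)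
      ≤ ∑ n ∈ range N, (((n + 1 : ℕ) : ℝ) ^ (1 - r) - (n : ℝ) ^ (1 - r)) := by
        gcongr with n
        push_cast
        have h := mul_add_one_rpow_sub_one_le_sub (σ := 1 - r) (by linarith) (by linarith)
          n.cast_nonneg
        rwa [sub_sub_cancel_left, mul_comm] at h
    _ = (N : ℝ) ^ (1 - r) := by
        rw [sum_range_sub (fun n : ℕ ↦ (n : ℝ) ^ (1 - r))]
        simp [zero_rpow (by linarith : 1 - r ≠ 0)]

theorem sum_range_floor_inv_add_one_rpow_neg_mul_le {r x : ℝ} (hr0 : 0 ≤ r) (hr1 : r < 1)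
    (hx : 0 < x) : (∑ n ∈ range ⌊x⁻¹⌋₊, ((n : ℝ) + 1) ^ (-r)) * x ≤ (1 - r)⁻¹ * x ^ r := by
  calc (∑ n ∈ range ⌊x⁻¹⌋₊, ((n : ℝ) + 1) ^ (-r)) * x
      ≤ (⌊x⁻¹⌋₊ : ℝ) ^ (1 - r) / (1 - r) * x := by
        gcongr; exact sum_range_add_one_rpow_neg_le hr0 hr1 _
    _ ≤ x⁻¹ ^ (1 - r) / (1 - r) * x := by
        gcongr
        exact Nat.floor_le (by positivity)
    _ = (1 - r)⁻¹ * x ^ r := by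
        rw [inv_rpow hx.le, ← rpow_neg hx.le, div_eq_mul_inv]
        rw [show x ^ r = x ^ (-(1 - r)) * x by rw [← rpow_add_one hx.ne']; ring_nf]
        ring

end Real

namespace ENNReal

theorem tsum_indicator_add_one_rpow_neg_mul_le {r : ℝ} (hr0 : 0 ≤ r) (hr1 : r < 1)
    {g : ℝ≥0∞} (hg : g ≠ ⊤) {s : Set ℕ} (hs : ∀ n ∈ s, g ≤ ((n : ℝ≥0∞) + 1)⁻¹) :
    ∑' n, s.indicator (fun n ↦ ((n : ℝ≥0∞) + 1) ^ (-r) * g) n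
      ≤ ENNReal.ofReal (1 - r)⁻¹ * g ^ r := by
  rcases eq_or_ne g 0 with rfl | hg0
  · simp
  set x := g.toReal
  have hx : 0 < x := toReal_pos hg0 hg
  have hs_range : s ⊆ range ⌊x⁻¹⌋₊ := by
    intro n hn
    have h := (toReal_le_toReal (by simp) (inv_ne_top.2 hg0)).2 (le_inv_iff_le_inv.1 (hs n hn))
    rw [toReal_inv, toReal_add (natCast_ne_top n) one_ne_top, toReal_natCast, toReal_one] at h
    rw [Finset.mem_coe, Finset.mem_range, Nat.lt_iff_add_one_le]
    exact Nat.le_floor (mod_cast h)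
  rw [tsum_eq_sum (s := range ⌊x⁻¹⌋₊) fun n hn ↦
    Set.indicator_of_notMem (fun h ↦ hn (hs_range h)) _]
  calc ∑ n ∈ range ⌊x⁻¹⌋₊, s.indicator (fun n ↦ ((n : ℝ≥0∞) + 1) ^ (-r) * g) n
      ≤ ∑ n ∈ range ⌊x⁻¹⌋₊, ((n : ℝ≥0∞) + 1) ^ (-r) * g :=
        sum_le_sum fun n _ ↦ Set.indicator_le_self _ _ n
    _ = ENNReal.ofReal ((∑ n ∈ range ⌊x⁻¹⌋₊, ((n : ℝ) + 1) ^ (-r)) * x) := by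
        rw [ofReal_mul (by positivity), ofReal_toReal hg, ← sum_mul,
          ofReal_sum_of_nonneg fun n _ ↦ by positivity]
        congr 1
        refine sum_congr rfl fun n _ ↦ ?_
        rw [← ofReal_rpow_of_pos (by positivity), ofReal_add n.cast_nonneg zero_le_one,
          ofReal_natCast, ofReal_one]
    _ ≤ ENNReal.ofReal ((1 - r)⁻¹ * x ^ r) :=
        ofReal_le_ofReal (Real.sum_range_floor_inv_add_one_rpow_neg_mul_le hr0 hr1 hx)
    _ = ENNReal.ofReal (1 - r)⁻¹ * g ^ r := by
        rw [ofReal_mul (inv_nonneg.2 (by linarith)), ← ofReal_rpow_of_nonneg hx.le hr0,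
          ofReal_toReal hg]

theorem tsum_add_one_rpow_neg_mul_lintegral_Ioi_le {r : ℝ} (hr0 : 0 ≤ r) (hr1 : r < 1)
    {G : ℝ → ℝ≥0∞} (hG : Measurable G) (hG_top : ∀ t, G t ≠ ⊤) {a : ℕ → ℝ} (ha : ∀ n, 0 ≤ a n)
    (hGa : ∀ n t, a n < t → G t ≤ ((n : ℝ≥0∞) + 1)⁻¹) :
    ∑' n : ℕ, ((n : ℝ≥0∞) + 1) ^ (-r) * ∫⁻ t in Set.Ioi (a n), G t
      ≤ ENNReal.ofReal (1 - r)⁻¹ * ∫⁻ t in Set.Ioi 0, G t ^ r := by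
  have hpoint : ∀ t,
      ∑' n : ℕ, (Set.Ioi (a n)).indicator (fun t ↦ ((n : ℝ≥0∞) + 1) ^ (-r) * G t) t
      ≤ (Set.Ioi 0).indicator (fun t ↦ ENNReal.ofReal (1 - r)⁻¹ * G t ^ r) t := by
    intro t
    rcases le_or_gt t 0 with ht | ht
    · simp [Set.indicator_of_notMem, ht, fun n ↦ ht.trans (ha n)]
    · rw [Set.indicator_of_mem (Set.mem_Ioi.2 ht)]
      exact tsum_indicator_add_one_rpow_neg_mul_le hr0 hr1 (hG_top t) (s := {n | a n < t})
        fun n hn ↦ hGa n t hn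
  calc ∑' n : ℕ, ((n : ℝ≥0∞) + 1) ^ (-r) * ∫⁻ t in Set.Ioi (a n), G t
      = ∑' n : ℕ, ∫⁻ t, (Set.Ioi (a n)).indicator (fun t ↦ ((n : ℝ≥0∞) + 1) ^ (-r) * G t) t := by
        simp_rw [lintegral_indicator measurableSet_Ioi, lintegral_const_mul _ hG]
    _ = ∫⁻ t, ∑' n : ℕ, (Set.Ioi (a n)).indicator (fun t ↦ ((n : ℝ≥0∞) + 1) ^ (-r) * G t) t :=
        (lintegral_tsum fun n ↦ ((hG.const_mul _).indicator measurableSet_Ioi).aemeasurable).symm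
    _ ≤ ∫⁻ t, (Set.Ioi 0).indicator (fun t ↦ ENNReal.ofReal (1 - r)⁻¹ * G t ^ r) t :=
        lintegral_mono hpoint
    _ = ENNReal.ofReal (1 - r)⁻¹ * ∫⁻ t in Set.Ioi 0, G t ^ r := by
        rw [lintegral_indicator measurableSet_Ioi, lintegral_const_mul _ (hG.pow_const r)]

end ENNReal

namespace MeasureTheory

variable {Ω : Type*} [MeasurableSpace Ω] {μ : Measure Ω} {Y : Ω → ℝ}

theorem tendsto_measure_setOf_lt_atTop [IsFiniteMeasure μ] (hY : Measurable Y) :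
    Tendsto (fun s : ℝ ↦ μ {ω | s < Y ω}) atTop (𝓝 0) := by
  have hanti : Antitone fun s : ℝ ↦ {ω | s < Y ω} := fun s t hst ω hω ↦ hst.trans_lt hω
  have hempty : ⋂ s : ℝ, {ω | s < Y ω} = ∅ :=
    Set.eq_empty_of_forall_notMem fun ω hω ↦ lt_irrefl (Y ω) (Set.mem_iInter.1 hω (Y ω))
  have h := tendsto_measure_iInter_atTop
    (fun _ ↦ (measurableSet_lt measurable_const hY).nullMeasurableSet) hanti ⟨0, measure_ne_top μ _⟩
  rwa [hempty, measure_empty] at h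

theorem measure_setOf_lt_lt_of_sInf_lt [IsFiniteMeasure μ] (hY : Measurable Y) {ε : ℝ≥0∞}
    (hε : 0 < ε) {t : ℝ} (ht : sInf {s : ℝ | μ {ω | s < Y ω} < ε} < t) :
    μ {ω | t < Y ω} < ε := by
  obtain ⟨v, hv, hvt⟩ := exists_lt_of_csInf_lt
    ((tendsto_measure_setOf_lt_atTop hY).eventually_lt_const hε).exists ht
  exact (measure_mono fun ω hω ↦ hvt.trans hω).trans_lt hv

theorem sInf_setOf_measure_lt_nonneg [IsProbabilityMeasure μ] (hY : ∀ ω, 0 ≤ Y ω) {ε : ℝ≥0∞}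
    (hε : ε ≤ 1) : 0 ≤ sInf {s : ℝ | μ {ω | s < Y ω} < ε} := by
  refine Real.sInf_nonneg fun s hs ↦ le_of_not_gt fun hs0 ↦ ?_
  have huniv : {ω | s < Y ω} = Set.univ := Set.eq_univ_of_forall fun ω ↦ hs0.trans_le (hY ω)
  exact (hs.trans_le hε).ne (by rw [huniv, measure_univ])

end MeasureTheory

theorem stmt_9_general {Ω : Type*} [MeasurableSpace Ω] (μ : Measure Ω) [IsProbabilityMeasure μ]
    (X : Ω → ℝ) (hXmeas : Measurable X) (p q : ℝ) (hq : 1 ≤ q) (hqp : q < p)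
    (hint : ∫⁻ t in Set.Ioi (0 : ℝ), (μ {ω | t < |X ω| ^ q}) ^ (q / p) < ⊤)
    (u : ℕ → ℝ)
    (hu : ∀ n : ℕ, 1 ≤ n →
      u n = sInf {t : ℝ | μ {ω | t < |X ω|} < (n : ENNReal)⁻¹}) :
    (∑' n : ℕ, ((n + 1 : ENNReal)) ^ (-(q / p)) *
      ∫⁻ t in Set.Ioi (u (n + 1) ^ q), μ {ω | t < |X ω| ^ q}) < ⊤ := by
  have hq0 : 0 < q := by linarith
  have hu' : ∀ n : ℕ, u (n + 1) = sInf {t : ℝ | μ {ω | t < |X ω|} < ((n : ℝ≥0∞) + 1)⁻¹} :=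
    fun n ↦ by exact_mod_cast hu (n + 1) n.succ_pos
  have hu0 : ∀ n, 0 ≤ u (n + 1) := fun n ↦ (hu' n).symm ▸
    sInf_setOf_measure_lt_nonneg (fun ω ↦ abs_nonneg (X ω)) (ENNReal.inv_le_one.2 le_add_self)
  have htail : ∀ n t, u (n + 1) ^ q < t → μ {ω | t < |X ω| ^ q} ≤ ((n : ℝ≥0∞) + 1)⁻¹ := by
    intro n t ht
    have ht0 : 0 ≤ t := (Real.rpow_nonneg (hu0 n) q).trans ht.le
    have hroot : {ω | t < |X ω| ^ q} ⊆ {ω | t ^ q⁻¹ < |X ω|} := fun ω hω ↦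
      (Real.rpow_inv_lt_iff_of_pos ht0 (abs_nonneg _) hq0).2 hω
    refine (measure_mono hroot).trans (measure_setOf_lt_lt_of_sInf_lt hXmeas.abs
      (by simp) ?_).le
    rw [← hu' n]
    exact (Real.lt_rpow_inv_iff_of_pos (hu0 n) ht0 hq0).2 ht
  have hG : Antitone fun t ↦ μ {ω | t < |X ω| ^ q} := fun s t hst ↦
    measure_mono fun ω hω ↦ hst.trans_lt hω
  refine (ENNReal.tsum_add_one_rpow_neg_mul_lintegral_Ioi_le (div_nonneg hq0.le (by linarith))
    ((div_lt_one (by linarith)).2 hqp) hG.measurable (fun t ↦ measure_ne_top μ _)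
    (fun n ↦ Real.rpow_nonneg (hu0 n) q) htail).trans_lt
    (ENNReal.mul_lt_top ENNReal.ofReal_lt_top hint)

theorem stmt_9 {Ω : Type*} [MeasurableSpace Ω] (μ : Measure Ω) [IsProbabilityMeasure μ]
    (X : Ω → ℝ) (hXmeas : Measurable X) (p q : ℝ) (hq : 1 ≤ q) (hqp : q < p) (hp : p < 2)
    (hint : ∫⁻ t in Set.Ioi (0 : ℝ), (μ {ω | t < |X ω| ^ q}) ^ (q / p) < ⊤)
    (u : ℕ → ℝ)
    (hu : ∀ n : ℕ, 1 ≤ n →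
      u n = sInf {t : ℝ | μ {ω | t < |X ω|} < (n : ENNReal)⁻¹}) :
    (∑' n : ℕ, ((n + 1 : ENNReal)) ^ (-(q / p)) *
      ∫⁻ t in Set.Ioi (u (n + 1) ^ q), μ {ω | t < |X ω| ^ q}) < ⊤ :=
  stmt_9_general μ X hXmeas p q hq hqp hint u hu
end

section
/- Let q > 0 and let {a_n; n ≥ 1} be nonnegative reals with ∑_{n=1}^∞ a_n < ∞; set b_n = ∑_{k=n}^∞ a_k. Let {V_n; n ≥ 1} be independent symmetric real-valued random variables and set α = 2^{1-q} if 0 < q ≤ 1 and α = 1 if q > 1. Then for all t > 0, P( sup_{n≥1} b_n |V_n|^q > t ) ≤ 2 P( ∑_{n=1}^∞ a_n |∑_{i=1}^n V_i|^q > t/α ). -/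
open MeasureTheory ProbabilityTheory

/-!
Lévy's reflection argument. Let `m` be the first index with `t < b m * |V m| ^ q`, and let
`V'` be `V` with the sign of `V m` reversed. For `n ≥ m` the partial sums of `V` and `V'` differ
by `2 V m`, so by the elementary inequality `2 (|u - v| / 2) ^ q ≤ α (|u| ^ q + |v| ^ q)` the
weighted sums `∑ a n |S n| ^ q` and `∑ a n |S' n| ^ q` add up to at least
`2 b m |V m| ^ q / α > 2 t / α`, so one of them exceeds `t / α`. The event `{first index = m}`
is unchanged by the flip, and by independence and symmetry `V'` has the law of `V`; hence this
event has at most twice the probability of its intersection with `{∑ a n |S n| ^ q > t / α}`.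
Sum over `m`.
-/

lemma two_mul_half_add_rpow_le {a b q : ℝ} (ha : 0 ≤ a) (hb : 0 ≤ b) (hq : 0 ≤ q) :
    2 * ((a + b) / 2) ^ q ≤ (if q ≤ 1 then (2 : ℝ) ^ (1 - q) else 1) * (a ^ q + b ^ q) := by
  have hsplit : 2 * ((a + b) / 2) ^ q = 2 ^ (1 - q) * (a + b) ^ q := by
    rw [Real.div_rpow (by positivity) zero_le_two, Real.rpow_sub two_pos, Real.rpow_one]
    ring
  rw [hsplit]
  split_ifs with hq1
  · exact mul_le_mul_of_nonneg_left (Real.rpow_add_le_add_rpow ha hb hq hq1) (by positivity)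
  · have hconvex : (a + b) ^ q ≤ 2 ^ (q - 1) * (a ^ q + b ^ q) := by
      lift a to NNReal using ha
      lift b to NNReal using hb
      exact_mod_cast NNReal.rpow_add_le_mul_rpow_add_rpow a b (not_le.mp hq1).le
    calc 2 ^ (1 - q) * (a + b) ^ q ≤ 2 ^ (1 - q) * (2 ^ (q - 1) * (a ^ q + b ^ q)) := by gcongr
      _ = 1 * (a ^ q + b ^ q) := by rw [← mul_assoc, ← Real.rpow_add two_pos]; norm_num

lemma two_mul_half_abs_sub_rpow_le {q : ℝ} (hq : 0 ≤ q) (u v : ℝ) :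
    2 * (|u - v| / 2) ^ q ≤ (if q ≤ 1 then (2 : ℝ) ^ (1 - q) else 1) * (|u| ^ q + |v| ^ q) := by
  calc 2 * (|u - v| / 2) ^ q ≤ 2 * ((|u| + |v|) / 2) ^ q := by
        gcongr
        exact abs_sub u v
    _ ≤ _ := two_mul_half_add_rpow_le (abs_nonneg u) (abs_nonneg v) hq

lemma iIndepFun.map_comp_eq_map {ι Ω β : Type*} [MeasurableSpace Ω] [MeasurableSpace β]
    {μ : Measure Ω} [IsProbabilityMeasure μ] {X : ι → Ω → β} (hX : ∀ i, Measurable (X i))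
    (hindep : iIndepFun X μ) {f : ι → β → β} (hf : ∀ i, Measurable (f i))
    (hlaw : ∀ i, μ.map (f i ∘ X i) = μ.map (X i)) :
    μ.map (fun ω i => f i (X i ω)) = μ.map (fun ω i => X i ω) := by
  calc μ.map (fun ω i => f i (X i ω)) = Measure.infinitePi fun i => μ.map (f i ∘ X i) :=
        (hindep.comp f hf).map_fun_eq_infinitePi_map fun i => (hf i).comp (hX i)
    _ = Measure.infinitePi fun i => μ.map (X i) := by simp only [hlaw]
    _ = μ.map (fun ω i => X i ω) := (hindep.map_fun_eq_infinitePi_map hX).symm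

def signFlip (m : ℕ) (x : ℕ → ℝ) : ℕ → ℝ := fun n => if n = m then -x n else x n

lemma measurable_signFlip (m : ℕ) : Measurable (signFlip m) :=
  measurable_pi_lambda _ fun n => by
    unfold signFlip
    split_ifs <;> fun_prop

lemma abs_signFlip (m : ℕ) (x : ℕ → ℝ) (n : ℕ) : |signFlip m x n| = |x n| := by
  unfold signFlip
  split_ifs <;> simp

lemma sum_range_sub_sum_range_signFlip (x : ℕ → ℝ) {m k : ℕ} (hmk : m ≤ k) :
    ∑ i ∈ Finset.range (k + 1), x i - ∑ i ∈ Finset.range (k + 1), signFlip m x i = 2 * x m := by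
  rw [← Finset.sum_sub_distrib]
  have hdiff : ∀ i, x i - signFlip m x i = if i = m then 2 * x m else 0 := by
    intro i
    unfold signFlip
    split_ifs with h
    · subst h; ring
    · ring
  simp [hdiff, Nat.lt_succ_of_le hmk]

lemma measurePreserving_signFlip {Ω : Type*} [MeasurableSpace Ω] {μ : Measure Ω}
    [IsProbabilityMeasure μ] {V : ℕ → Ω → ℝ} (hV : ∀ n, Measurable (V n))
    (hindep : iIndepFun V μ) (hsymm : ∀ n, IdentDistrib (V n) (fun ω => -V n ω) μ μ) (m : ℕ) :
    MeasurePreserving (signFlip m) (μ.map fun ω n => V n ω) (μ.map fun ω n => V n ω) := by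
  refine ⟨measurable_signFlip m, ?_⟩
  rw [Measure.map_map (measurable_signFlip m) (measurable_pi_lambda _ hV)]
  refine iIndepFun.map_comp_eq_map hV hindep (f := fun n y => if n = m then -y else y)
    (fun n => by split_ifs <;> fun_prop) fun n => ?_
  show μ.map (fun ω => if n = m then -V n ω else V n ω) = μ.map (V n)
  split_ifs
  · exact (hsymm n).map_eq.symm
  · rfl

noncomputable def weightedPartialSumPow (a : ℕ → ℝ) (q : ℝ) (x : ℕ → ℝ) : ENNReal :=
  ∑' n, ENNReal.ofReal (a n * |∑ i ∈ Finset.range (n + 1), x i| ^ q)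

lemma measurable_weightedPartialSumPow (a : ℕ → ℝ) (q : ℝ) :
    Measurable (weightedPartialSumPow a q) :=
  Measurable.tsum fun n => by fun_prop

lemma ofReal_two_mul_tsum_mul_rpow_le {a : ℕ → ℝ} {q c : ℝ} (hc0 : 0 ≤ c)
    (hc : ∀ u v : ℝ, 2 * (|u - v| / 2) ^ q ≤ c * (|u| ^ q + |v| ^ q))
    (ha : ∀ n, 0 ≤ a n) (hasum : Summable a) (x : ℕ → ℝ) (m : ℕ) :
    ENNReal.ofReal (2 * ((∑' k, a (m + k)) * |x m| ^ q)) ≤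
      ENNReal.ofReal c *
        (weightedPartialSumPow a q x + weightedPartialSumPow a q (signFlip m x)) := by
  set F : (ℕ → ℝ) → ℕ → ENNReal :=
    fun y n => ENNReal.ofReal (a n * |∑ i ∈ Finset.range (n + 1), y i| ^ q)
  have hterm : ∀ k, ENNReal.ofReal (a (m + k) * (2 * |x m| ^ q)) ≤
      ENNReal.ofReal c * (F x (m + k) + F (signFlip m x) (m + k)) := by
    intro k
    rw [← ENNReal.ofReal_add (mul_nonneg (ha _) (by positivity))
      (mul_nonneg (ha _) (by positivity)), ← ENNReal.ofReal_mul hc0]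
    apply ENNReal.ofReal_le_ofReal
    have hpair := hc (∑ i ∈ Finset.range (m + k + 1), x i)
      (∑ i ∈ Finset.range (m + k + 1), signFlip m x i)
    rw [sum_range_sub_sum_range_signFlip x (Nat.le_add_right m k), abs_mul, abs_two,
      mul_div_cancel_left₀ _ two_ne_zero] at hpair
    calc a (m + k) * (2 * |x m| ^ q)
        ≤ a (m + k) * (c * (|∑ i ∈ Finset.range (m + k + 1), x i| ^ q
            + |∑ i ∈ Finset.range (m + k + 1), signFlip m x i| ^ q)) :=
          mul_le_mul_of_nonneg_left hpair (ha _)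
      _ = _ := by ring
  have htail : Summable fun k => a (m + k) := hasum.comp_injective (add_right_injective m)
  calc ENNReal.ofReal (2 * ((∑' k, a (m + k)) * |x m| ^ q))
      = ∑' k, ENNReal.ofReal (a (m + k) * (2 * |x m| ^ q)) := by
        rw [← ENNReal.ofReal_tsum_of_nonneg (fun k => mul_nonneg (ha _) (by positivity))
          (htail.mul_right _), tsum_mul_right]
        ring_nf
    _ ≤ ∑' k, ENNReal.ofReal c * (F x (m + k) + F (signFlip m x) (m + k)) :=
        ENNReal.tsum_le_tsum hterm
    _ = ENNReal.ofReal c * (∑' k, F x (m + k) + ∑' k, F (signFlip m x) (m + k)) := by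
        rw [ENNReal.tsum_mul_left, ENNReal.tsum_add]
    _ ≤ _ := by
        gcongr
        · exact ENNReal.tsum_comp_le_tsum_of_injective (add_right_injective m) (F x)
        · exact ENNReal.tsum_comp_le_tsum_of_injective (add_right_injective m) (F (signFlip m x))

lemma lt_weightedPartialSumPow_or_signFlip {a : ℕ → ℝ} {q c t : ℝ} (hc0 : 0 < c)
    (hc : ∀ u v : ℝ, 2 * (|u - v| / 2) ^ q ≤ c * (|u| ^ q + |v| ^ q))
    (ha : ∀ n, 0 ≤ a n) (hasum : Summable a) (ht : 0 ≤ t) {x : ℕ → ℝ} {m : ℕ}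
    (hx : t < (∑' k, a (m + k)) * |x m| ^ q) :
    ENNReal.ofReal (t / c) < weightedPartialSumPow a q x ∨
      ENNReal.ofReal (t / c) < weightedPartialSumPow a q (signFlip m x) := by
  by_contra! hle
  have hbound : ENNReal.ofReal (2 * ((∑' k, a (m + k)) * |x m| ^ q)) ≤ ENNReal.ofReal (2 * t) :=
    calc _ ≤ ENNReal.ofReal c * (weightedPartialSumPow a q x
              + weightedPartialSumPow a q (signFlip m x)) :=
          ofReal_two_mul_tsum_mul_rpow_le hc0.le hc ha hasum x m
      _ ≤ ENNReal.ofReal c * (ENNReal.ofReal (t / c) + ENNReal.ofReal (t / c)) := by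
          gcongr
          exacts [hle.1, hle.2]
      _ = ENNReal.ofReal (2 * t) := by
          rw [← ENNReal.ofReal_add (by positivity) (by positivity), ← ENNReal.ofReal_mul hc0.le]
          congr 1
          field_simp
          ring
  have := (ENNReal.ofReal_le_ofReal_iff (by positivity)).1 hbound
  linarith

lemma measure_iUnion_le_two_mul_of_reflection {X : Type*} [MeasurableSpace X] {ν : Measure X}
    {σ : ℕ → X → X} (hσ : ∀ n, MeasurePreserving (σ n) ν ν) {C : ℕ → Set X}
    (hC : ∀ n, MeasurableSet (C n)) (hCσ : ∀ n k, σ n ⁻¹' C k = C k) {B : Set X}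
    (hB : MeasurableSet B) (hCB : ∀ n, C n ⊆ B ∪ σ n ⁻¹' B) :
    ν (⋃ n, C n) ≤ 2 * ν B := by
  set D := disjointed C
  have hD : ∀ n, MeasurableSet (D n) := MeasurableSet.disjointed hC
  have hDσ : ∀ n, σ n ⁻¹' D n = D n := by
    intro n
    simp only [D, disjointed_eq_inter_compl, Set.preimage_inter, Set.preimage_iInter,
      Set.preimage_compl, hCσ]
  have hDB : ∀ n, ν (D n) ≤ 2 * ν (D n ∩ B) := by
    intro n
    calc ν (D n) ≤ ν (D n ∩ B ∪ σ n ⁻¹' (D n ∩ B)) := by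
          refine measure_mono fun x hx => ?_
          rcases hCB n (disjointed_subset C n hx) with h | h
          · exact Or.inl ⟨hx, h⟩
          · rw [Set.preimage_inter, hDσ]
            exact Or.inr ⟨hx, h⟩
      _ ≤ ν (D n ∩ B) + ν (σ n ⁻¹' (D n ∩ B)) := measure_union_le _ _
      _ = 2 * ν (D n ∩ B) := by
          rw [(hσ n).measure_preimage ((hD n).inter hB).nullMeasurableSet, two_mul]
  calc ν (⋃ n, C n) = ∑' n, ν (D n) := by
        rw [← iUnion_disjointed, measure_iUnion (disjoint_disjointed C) hD]
    _ ≤ ∑' n, 2 * ν (D n ∩ B) := ENNReal.tsum_le_tsum hDB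
    _ = 2 * ν (⋃ n, D n ∩ B) := by
        rw [ENNReal.tsum_mul_left, measure_iUnion ((disjoint_disjointed C).mono fun _ _ h =>
          h.mono Set.inter_subset_left Set.inter_subset_left) fun n => (hD n).inter hB]
    _ ≤ 2 * ν B := by
        gcongr
        exact Set.iUnion_subset fun n => Set.inter_subset_right

theorem stmt_11 {Ω : Type*} [MeasurableSpace Ω] (μ : Measure Ω) [IsProbabilityMeasure μ]
    (V : ℕ → Ω → ℝ) (hVmeas : ∀ n, Measurable (V n))
    (hindep : iIndepFun V μ)
    (hsymm : ∀ n, IdentDistrib (V n) (fun ω => -V n ω) μ μ)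
    (a : ℕ → ℝ) (ha : ∀ n, 0 ≤ a n) (hasum : Summable a)
    (b : ℕ → ℝ) (hb : ∀ n, b n = ∑' k : ℕ, a (n + k))
    (q α : ℝ) (hq : 0 < q)
    (hα : α = if q ≤ 1 then (2 : ℝ) ^ (1 - q) else 1) (t : ℝ) (ht : 0 < t) :
    μ {ω | ∃ n : ℕ, t < b n * |V n ω| ^ q}
      ≤ 2 * μ {ω | ENNReal.ofReal (t / α) <
          ∑' n : ℕ, ENNReal.ofReal (a n * |∑ i ∈ Finset.range (n + 1), V i ω| ^ q)} := by
  have hα0 : 0 < α := by rw [hα]; split_ifs <;> positivity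
  have hc := two_mul_half_abs_sub_rpow_le hq.le
  rw [← hα] at hc
  set Φ : Ω → ℕ → ℝ := fun ω n => V n ω
  set C : ℕ → Set (ℕ → ℝ) := fun n => {x | t < b n * |x n| ^ q}
  set B : Set (ℕ → ℝ) := {x | ENNReal.ofReal (t / α) < weightedPartialSumPow a q x}
  have hΦ : Measurable Φ := measurable_pi_lambda _ hVmeas
  have hC : ∀ n, MeasurableSet (C n) := fun n => measurableSet_lt measurable_const (by fun_prop)
  have hB : MeasurableSet B :=
    measurableSet_lt measurable_const (measurable_weightedPartialSumPow a q)
  have hlhs : {ω | ∃ n : ℕ, t < b n * |V n ω| ^ q} = Φ ⁻¹' ⋃ n, C n := by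
    ext ω
    simp [Φ, C]
  have hrhs : {ω | ENNReal.ofReal (t / α) <
      ∑' n : ℕ, ENNReal.ofReal (a n * |∑ i ∈ Finset.range (n + 1), V i ω| ^ q)} = Φ ⁻¹' B := rfl
  rw [hlhs, hrhs,
    ← Measure.map_apply hΦ (MeasurableSet.iUnion hC), ← Measure.map_apply hΦ hB]
  refine measure_iUnion_le_two_mul_of_reflection (measurePreserving_signFlip hVmeas hindep hsymm)
    hC (fun n k => ?_) hB fun n x hx => ?_
  · ext x
    simp [C, abs_signFlip]
  · rw [Set.mem_ofPred_eq, hb] at hx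
    exact lt_weightedPartialSumPow_or_signFlip hα0 hc ha hasum ht.le hx
end

section
/- Let g : ℝ → [0, ∞] be a measurable even function such that g(x + y) ≤ β(g(x) + g(y)) for all x, y, where β ≥ 1 is a constant. Let V be a real-valued random variable and V̂ = V − V′ where V′ is an independent copy of V. Then for all t ≥ 0, P(g(V) ≤ t) · E[g(V)] ≤ β E[g(V̂)] + β t, and E[g(V̂)] ≤ 2β E[g(V)]. -/
open MeasureTheory ProbabilityTheory
open scoped ENNReal

/-!
On the event `g V' ≤ t`, which is independent of `V`, quasi-subadditivity gives
`g V ≤ β g (V - V') + β t`; integrating, and using that `g V'` and `g V` have the same law, gives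
the first bound. The second is the pointwise bound `g (V - V') ≤ β (g V + g V')`, which uses
evenness, integrated.
-/

def QuasiSubadditive {G : Type*} [Add G] (β : ℝ≥0∞) (g : G → ℝ≥0∞) : Prop :=
  ∀ x y, g (x + y) ≤ β * (g x + g y)

namespace QuasiSubadditive

variable {G : Type*} [AddGroup G] {β : ℝ≥0∞} {g : G → ℝ≥0∞}

theorem le_mul_sub_add_mul (hg : QuasiSubadditive β g) (x y : G) :
    g x ≤ β * g (x - y) + β * g y := by
  simpa only [sub_add_cancel, mul_add] using hg (x - y) y

theorem sub_le (hg : QuasiSubadditive β g) (heven : ∀ x, g (-x) = g x) (x y : G) :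
    g (x - y) ≤ β * (g x + g y) := by
  simpa only [sub_eq_add_neg, heven] using hg x (-y)

end QuasiSubadditive

theorem ProbabilityTheory.IndepFun.lintegral_indicator_preimage_comp {Ω α γ : Type*}
    [MeasurableSpace Ω] [MeasurableSpace α] [MeasurableSpace γ] {μ : Measure Ω}
    {X : Ω → α} {Y : Ω → γ} (h : IndepFun X Y μ) (hX : AEMeasurable X μ)
    (hY : AEMeasurable Y μ) {f : α → ℝ≥0∞} (hf : Measurable f) {s : Set γ}
    (hs : MeasurableSet s) :
    ∫⁻ ω, (Y ⁻¹' s).indicator (fun ω ↦ f (X ω)) ω ∂μ = μ (Y ⁻¹' s) * ∫⁻ ω, f (X ω) ∂μ := by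
  have hind : IndepFun (fun ω ↦ s.indicator (1 : γ → ℝ≥0∞) (Y ω)) (fun ω ↦ f (X ω)) μ :=
    h.symm.comp (measurable_one.indicator hs) hf
  calc ∫⁻ ω, (Y ⁻¹' s).indicator (fun ω ↦ f (X ω)) ω ∂μ
      = ∫⁻ ω, s.indicator 1 (Y ω) * f (X ω) ∂μ := by
        congr 1 with ω
        by_cases hω : Y ω ∈ s <;> simp [hω]
    _ = (∫⁻ ω, (Y ⁻¹' s).indicator 1 ω ∂μ) * ∫⁻ ω, f (X ω) ∂μ :=
        lintegral_mul_eq_lintegral_mul_lintegral_of_indepFun''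
          ((measurable_one.indicator hs).comp_aemeasurable hY) (hf.comp_aemeasurable hX) hind
    _ = μ (Y ⁻¹' s) * ∫⁻ ω, f (X ω) ∂μ := by
        rw [lintegral_indicator_one₀ (hY.nullMeasurable hs)]

theorem lintegral_comp_sub_le {Ω G : Type*} [MeasurableSpace Ω] [AddGroup G] [MeasurableSpace G]
    [MeasurableSub₂ G] {μ : Measure Ω} {β : ℝ≥0∞} {g : G → ℝ≥0∞} (hgmeas : Measurable g)
    (hg : QuasiSubadditive β g) (heven : ∀ x, g (-x) = g x) {X Y : Ω → G}
    (hX : AEMeasurable X μ) (hY : AEMeasurable Y μ) :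
    ∫⁻ ω, g (X ω - Y ω) ∂μ ≤ β * (∫⁻ ω, g (X ω) ∂μ + ∫⁻ ω, g (Y ω) ∂μ) := by
  have hgX : AEMeasurable (fun ω ↦ g (X ω)) μ := hgmeas.comp_aemeasurable hX
  calc ∫⁻ ω, g (X ω - Y ω) ∂μ ≤ ∫⁻ ω, β * (g (X ω) + g (Y ω)) ∂μ :=
        lintegral_mono fun ω ↦ hg.sub_le heven _ _
    _ = β * (∫⁻ ω, g (X ω) ∂μ + ∫⁻ ω, g (Y ω) ∂μ) := by
        have hgXY : AEMeasurable (fun ω ↦ g (X ω) + g (Y ω)) μ :=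
          hgX.add (hgmeas.comp_aemeasurable hY)
        rw [lintegral_const_mul'' _ hgXY, lintegral_add_left' hgX]

theorem stmt_13_general {Ω : Type*} [MeasurableSpace Ω] (μ : Measure Ω) [IsProbabilityMeasure μ]
    (g : ℝ → ENNReal) (hgmeas : Measurable g) (hgeven : ∀ x : ℝ, g (-x) = g x)
    (β : ENNReal)
    (hgsub : ∀ x y : ℝ, g (x + y) ≤ β * (g x + g y))
    (V V' : Ω → ℝ)
    (hindep : IndepFun V V' μ) (hid : IdentDistrib V V' μ μ) (t : ENNReal) :
    μ {ω | g (V ω) ≤ t} * (∫⁻ ω, g (V ω) ∂μ)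
        ≤ β * (∫⁻ ω, g (V ω - V' ω) ∂μ) + β * t
      ∧ (∫⁻ ω, g (V ω - V' ω) ∂μ) ≤ 2 * β * ∫⁻ ω, g (V ω) ∂μ := by
  have hV := hid.aemeasurable_fst
  have hV' := hid.aemeasurable_snd
  have hsub : QuasiSubadditive β g := hgsub
  have hA : MeasurableSet {x | g x ≤ t} := hgmeas measurableSet_Iic
  constructor
  · calc μ {ω | g (V ω) ≤ t} * ∫⁻ ω, g (V ω) ∂μ
        = ∫⁻ ω, (V' ⁻¹' {x | g x ≤ t}).indicator (fun ω ↦ g (V ω)) ω ∂μ := by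
          rw [hindep.lintegral_indicator_preimage_comp hV hV' hgmeas hA]
          exact congrArg (· * _) (hid.measure_mem_eq hA)
      _ ≤ ∫⁻ ω, β * g (V ω - V' ω) + β * t ∂μ := by
          refine lintegral_mono fun ω ↦ Set.indicator_apply_le' (fun hω ↦ ?_) fun _ ↦ zero_le
          exact (hsub.le_mul_sub_add_mul _ _).trans (by gcongr; exact hω)
      _ = β * ∫⁻ ω, g (V ω - V' ω) ∂μ + β * t := by
          have hgVV' : AEMeasurable (fun ω ↦ g (V ω - V' ω)) μ :=
            hgmeas.comp_aemeasurable (hV.sub hV')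
          rw [lintegral_add_right _ measurable_const, lintegral_const_mul'' _ hgVV',
            lintegral_const, measure_univ, mul_one]
  · calc ∫⁻ ω, g (V ω - V' ω) ∂μ ≤ β * (∫⁻ ω, g (V ω) ∂μ + ∫⁻ ω, g (V' ω) ∂μ) :=
          lintegral_comp_sub_le hgmeas hsub hgeven hV hV'
      _ = 2 * β * ∫⁻ ω, g (V ω) ∂μ := by
          rw [show ∫⁻ ω, g (V' ω) ∂μ = ∫⁻ ω, g (V ω) ∂μ from (hid.comp hgmeas).lintegral_eq.symm]
          ring

theorem stmt_13 {Ω : Type*} [MeasurableSpace Ω] (μ : Measure Ω) [IsProbabilityMeasure μ]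
    (g : ℝ → ENNReal) (hgmeas : Measurable g) (hgeven : ∀ x : ℝ, g (-x) = g x)
    (β : ENNReal) (hβ : 1 ≤ β) (hβtop : β ≠ ⊤)
    (hgsub : ∀ x y : ℝ, g (x + y) ≤ β * (g x + g y))
    (V V' : Ω → ℝ) (hV : Measurable V) (hV' : Measurable V')
    (hindep : IndepFun V V' μ) (hid : IdentDistrib V V' μ μ) (t : ENNReal) :
    μ {ω | g (V ω) ≤ t} * (∫⁻ ω, g (V ω) ∂μ)
        ≤ β * (∫⁻ ω, g (V ω - V' ω) ∂μ) + β * t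
      ∧ (∫⁻ ω, g (V ω - V' ω) ∂μ) ≤ 2 * β * ∫⁻ ω, g (V ω) ∂μ :=
  stmt_13_general μ g hgmeas hgeven β hgsub V V' hindep hid t
end

section
/- Let 1 < r < p < 2 and let X be a real-valued symmetric random variable with P(|X| > t) ~ 1/(p t^p (ln t)^r) as t → ∞ (e.g., with tail P(|X| > t) = ∫_t^∞ dx/(x^{p+1} (ln x)^r) for t ≥ e). Then for 1 ≤ q < p, the integral ∫_0^∞ P(|X|^q > t)^{q/p} dt is finite if p/r < q < p and infinite if 1 ≤ q ≤ p/r. -/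
/-!
Put `F x = x ^ (-p) * (log x) ^ (-r)`. Then
`-F' x = (p + r / log x) / (x ^ (p + 1) * (log x) ^ r)`, so for `s ≥ e` the tail
`T s = P(|X| > s)` satisfies `F s / (p + r) ≤ T s ≤ F s / p`.
Since `P(|X| ^ q > t) = T (t ^ (1/q))` and
`F (t ^ (1/q)) ^ (q/p) = q ^ (r q/p) t⁻¹ (log t) ^ (-r q/p)`, for `t ≥ e ^ q` the integrand is
comparable to `t⁻¹ (log t) ^ (-r q/p)`, whose integral at infinity is finite iff `r q / p > 1`
(substitute `t = exp u`). Near `0` the integrand is bounded by `1`.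
-/

open MeasureTheory ProbabilityTheory Set Filter Topology Real
open scoped ENNReal

theorem integrableOn_Ioi_log_rpow_mul_inv_iff {s b : ℝ} (hb : 1 < b) :
    IntegrableOn (fun t ↦ log t ^ s * t⁻¹) (Ioi b) ↔ s < -1 := by
  rw [← exp_log (zero_lt_one.trans hb), ← image_exp_Ioi,
    integrableOn_image_iff_integrableOn_abs_deriv_smul measurableSet_Ioi
      (fun u _ ↦ (hasDerivAt_exp u).hasDerivWithinAt) exp_injective.injOn,
    ← integrableOn_Ioi_rpow_iff (log_pos hb)]
  refine integrableOn_congr_fun (fun u _ ↦ ?_) measurableSet_Ioi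
  simp only [abs_of_pos (exp_pos u), log_exp, smul_eq_mul]
  field_simp

theorem hasDerivAt_rpow_neg_mul_log_rpow_neg (p r : ℝ) {x : ℝ} (hx : 1 < x) :
    HasDerivAt (fun x ↦ x ^ (-p) * log x ^ (-r))
      (-((p + r / log x) / (x ^ (p + 1) * log x ^ r))) x := by
  have hx0 : x ≠ 0 := by positivity
  have hL : log x ≠ 0 := (log_pos hx).ne'
  have := ((hasDerivAt_rpow_const (p := -p) (Or.inl hx0))).mul
    ((hasDerivAt_rpow_const (p := -r) (Or.inl hL)).comp x (hasDerivAt_log hx0))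
  refine this.congr_deriv ?_
  simp only [Function.comp_apply]
  have hx0' : 0 ≤ x := (zero_lt_one.trans hx).le
  rw [rpow_sub_one hx0, rpow_sub_one hL, rpow_add_one hx0, rpow_neg hx0',
    rpow_neg (log_pos hx).le]
  field_simp
  ring

theorem tendsto_rpow_neg_mul_log_rpow_neg_atTop {p r : ℝ} (hp : 0 < p) (hr : 0 ≤ r) :
    Tendsto (fun x ↦ x ^ (-p) * log x ^ (-r)) atTop (𝓝 0) := by
  refine squeeze_zero' ?_ ?_ (tendsto_rpow_neg_atTop hp)
  · filter_upwards [eventually_ge_atTop 1] with x hx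
    exact mul_nonneg (rpow_nonneg (by linarith) _) (rpow_nonneg (log_nonneg hx) _)
  · filter_upwards [eventually_ge_atTop (exp 1)] with x hx
    have hx0 : 0 < x := (exp_pos 1).trans_le hx
    have hL : 1 ≤ log x := by rwa [le_log_iff_exp_le hx0]
    exact mul_le_of_le_one_right (rpow_nonneg hx0.le _)
      (rpow_le_one_of_one_le_of_nonpos hL (by linarith))

noncomputable def paretoLogTail (p r s : ℝ) : ℝ :=
  ∫ x in Ioi s, 1 / (x ^ (p + 1) * log x ^ r)

section ParetoLogTail

variable {p r s : ℝ}

theorem integrableOn_and_integral_weighted_paretoLogTail_integrand (hp : 0 < p) (hr : 0 ≤ r)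
    (hs : 1 < s) :
    IntegrableOn (fun x ↦ (p + r / log x) / (x ^ (p + 1) * log x ^ r)) (Ioi s) ∧
      ∫ x in Ioi s, (p + r / log x) / (x ^ (p + 1) * log x ^ r) = s ^ (-p) * log s ^ (-r) := by
  have hderiv : ∀ x ∈ Ici s, HasDerivAt (fun x ↦ x ^ (-p) * log x ^ (-r))
      (-((p + r / log x) / (x ^ (p + 1) * log x ^ r))) x :=
    fun x hx ↦ hasDerivAt_rpow_neg_mul_log_rpow_neg p r (hs.trans_le hx)
  have hnonpos : ∀ x ∈ Ioi s, -((p + r / log x) / (x ^ (p + 1) * log x ^ r)) ≤ 0 := by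
    intro x hx
    have hx : 1 < x := hs.trans hx
    exact neg_nonpos.2 (div_nonneg (add_nonneg hp.le (div_nonneg hr (log_pos hx).le))
      (mul_nonneg (rpow_nonneg (by linarith) _) (rpow_nonneg (log_nonneg hx.le) _)))
  have hlim := tendsto_rpow_neg_mul_log_rpow_neg_atTop hp hr
  refine ⟨by simpa using (integrableOn_Ioi_deriv_of_nonpos' hderiv hnonpos hlim).neg, ?_⟩
  rw [← neg_neg (∫ x in Ioi s, _), ← integral_neg,
    integral_Ioi_of_hasDerivAt_of_nonpos' hderiv hnonpos hlim, zero_sub, neg_neg]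

theorem paretoLogTail_integrand_nonneg {x : ℝ} (hx : 1 < x) :
    0 ≤ 1 / (x ^ (p + 1) * log x ^ r) :=
  one_div_nonneg.2 (mul_nonneg (rpow_nonneg (by linarith) _) (rpow_nonneg (log_nonneg hx.le) _))

theorem integrableOn_paretoLogTail_integrand (hp : 0 < p) (hr : 0 ≤ r) (hs : 1 < s) :
    IntegrableOn (fun x ↦ 1 / (x ^ (p + 1) * log x ^ r)) (Ioi s) := by
  refine ((integrableOn_and_integral_weighted_paretoLogTail_integrand hp hr hs).1.const_mul
    p⁻¹).mono' ?_ ?_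
  · exact (by have := measurable_log; fun_prop : Measurable _).aestronglyMeasurable
  · filter_upwards [ae_restrict_mem measurableSet_Ioi] with x hx
    have hx : 1 < x := hs.trans hx
    have h0 := paretoLogTail_integrand_nonneg (p := p) (r := r) hx
    have : 0 ≤ r / log x := div_nonneg hr (log_pos hx).le
    rw [norm_of_nonneg h0, ← mul_div_assoc, div_eq_mul_one_div (p⁻¹ * _)]
    refine le_mul_of_one_le_left h0 ?_
    rw [le_inv_mul_iff₀ hp]
    linarith

theorem mul_paretoLogTail_le (hp : 0 < p) (hr : 0 ≤ r) (hs : 1 < s) :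
    p * paretoLogTail p r s ≤ s ^ (-p) * log s ^ (-r) := by
  rw [← (integrableOn_and_integral_weighted_paretoLogTail_integrand hp hr hs).2, paretoLogTail,
    ← integral_const_mul]
  refine setIntegral_mono_on ((integrableOn_paretoLogTail_integrand hp hr hs).const_mul p)
    (integrableOn_and_integral_weighted_paretoLogTail_integrand hp hr hs).1 measurableSet_Ioi
    fun x hx ↦ ?_
  have hx : 1 < x := hs.trans hx
  rw [← mul_one_div (p + _)]
  gcongr
  · exact paretoLogTail_integrand_nonneg hx
  · exact le_add_of_nonneg_right (div_nonneg hr (log_pos hx).le)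

theorem le_mul_paretoLogTail (hp : 0 < p) (hr : 0 ≤ r) (hs : exp 1 ≤ s) :
    s ^ (-p) * log s ^ (-r) ≤ (p + r) * paretoLogTail p r s := by
  have hs1 : 1 < s := (one_lt_exp_iff.2 one_pos).trans_le hs
  rw [← (integrableOn_and_integral_weighted_paretoLogTail_integrand hp hr hs1).2, paretoLogTail,
    ← integral_const_mul]
  refine setIntegral_mono_on
    (integrableOn_and_integral_weighted_paretoLogTail_integrand hp hr hs1).1
    ((integrableOn_paretoLogTail_integrand hp hr hs1).const_mul _) measurableSet_Ioi
    fun x hx ↦ ?_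
  have hL : 1 ≤ log x := by
    rw [le_log_iff_exp_le (zero_lt_one.trans (hs1.trans hx))]; exact hs.trans hx.le
  rw [← mul_one_div (p + _)]
  gcongr
  · exact paretoLogTail_integrand_nonneg (hs1.trans hx)
  · exact div_le_self hr hL

end ParetoLogTail

theorem paretoLogTail_nonneg (p r : ℝ) {s : ℝ} (hs : 1 ≤ s) : 0 ≤ paretoLogTail p r s :=
  setIntegral_nonneg measurableSet_Ioi fun _ hx ↦
    paretoLogTail_integrand_nonneg (hs.trans_lt hx)

theorem exp_one_le_rpow_inv {q t : ℝ} (hq : 0 < q) (ht : exp q ≤ t) : exp 1 ≤ t ^ q⁻¹ :=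
  calc exp 1 = exp q ^ q⁻¹ := by rw [← exp_mul, mul_inv_cancel₀ hq.ne']
    _ ≤ t ^ q⁻¹ := rpow_le_rpow (exp_pos q).le ht (inv_nonneg.2 hq.le)

theorem rpow_neg_mul_log_rpow_neg_of_rpow_inv {p q r t : ℝ} (hp : p ≠ 0) (hq : 0 < q)
    (ht : 1 < t) :
    ((t ^ q⁻¹) ^ (-p) * log (t ^ q⁻¹) ^ (-r)) ^ (q / p)
      = q ^ (r * (q / p)) * (log t ^ (-(r * (q / p))) * t⁻¹) := by
  have ht0 : 0 < t := zero_lt_one.trans ht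
  have hL : 0 < log t := log_pos ht
  rw [log_rpow ht0, mul_rpow (by positivity) (by positivity), ← rpow_mul (by positivity),
    ← rpow_mul ht0.le, ← rpow_mul (by positivity), mul_rpow (by positivity) hL.le,
    inv_rpow hq.le, ← rpow_neg hq.le,
    show q⁻¹ * (-p * (q / p)) = -1 by field_simp, rpow_neg_one, neg_mul, neg_neg]
  ring

theorem paretoLogTail_rpow_inv_rpow_bounds {p q r : ℝ} (hp : 0 < p) (hq : 0 < q)
    (hr : 0 ≤ r) :
    ∃ c C : ℝ, 0 < c ∧ ∀ t, exp q ≤ t →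
      c * (log t ^ (-(r * (q / p))) * t⁻¹) ≤ paretoLogTail p r (t ^ q⁻¹) ^ (q / p) ∧
      paretoLogTail p r (t ^ q⁻¹) ^ (q / p) ≤ C * (log t ^ (-(r * (q / p))) * t⁻¹) := by
  refine ⟨((p + r) ^ (q / p))⁻¹ * q ^ (r * (q / p)), (p ^ (q / p))⁻¹ * q ^ (r * (q / p)),
    by positivity, fun t ht ↦ ?_⟩
  have ht1 : 1 < t := (one_lt_exp_iff.2 hq).trans_le ht
  have hs := exp_one_le_rpow_inv hq ht
  have hs1 : 1 < t ^ q⁻¹ := (one_lt_exp_iff.2 one_pos).trans_le hs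
  have hT := paretoLogTail_nonneg p r hs1.le
  have hpq : 0 ≤ q / p := by positivity
  rw [mul_assoc, mul_assoc, ← rpow_neg_mul_log_rpow_neg_of_rpow_inv hp.ne' hq ht1,
    inv_mul_le_iff₀ (by positivity), le_inv_mul_iff₀ (by positivity), ← mul_rpow hp.le hT,
    ← mul_rpow (by positivity) hT]
  have hF : 0 ≤ (t ^ q⁻¹) ^ (-p) * log (t ^ q⁻¹) ^ (-r) :=
    mul_nonneg (by positivity) (rpow_nonneg (log_nonneg hs1.le) _)
  exact ⟨rpow_le_rpow hF (le_mul_paretoLogTail hp hr hs) hpq,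
    rpow_le_rpow (by positivity) (mul_paretoLogTail_le hp hr hs1) hpq⟩

theorem measure_lt_rpow_abs_eq_ofReal_paretoLogTail {Ω : Type*} [MeasurableSpace Ω]
    {μ : Measure Ω} [IsFiniteMeasure μ] {X : Ω → ℝ} {p q r : ℝ}
    (htail : ∀ t : ℝ, exp 1 ≤ t → (μ {ω | t < |X ω|}).toReal = paretoLogTail p r t)
    (hq : 0 < q) {t : ℝ} (ht : exp q ≤ t) :
    μ {ω | t < |X ω| ^ q} = ENNReal.ofReal (paretoLogTail p r (t ^ q⁻¹)) := by
  have ht0 : 0 < t := (exp_pos q).trans_le ht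
  have hs := exp_one_le_rpow_inv hq ht
  have hset : {ω | t < |X ω| ^ q} = {ω | t ^ q⁻¹ < |X ω|} := by
    ext ω
    exact (rpow_inv_lt_iff_of_pos ht0.le (abs_nonneg _) hq).symm
  rw [hset, ← htail _ hs, ENNReal.ofReal_toReal (measure_ne_top μ _)]

section SetLIntegralIoi

variable {f : ℝ → ℝ≥0∞} {g : ℝ → ℝ} {a b : ℝ}

theorem setLIntegral_Ioi_lt_top_of_le_one (C : ℝ) (hf : ∀ t, f t ≤ 1)
    (hfg : ∀ t ∈ Ioi b, f t ≤ ENNReal.ofReal (C * g t)) (hg : IntegrableOn g (Ioi b)) :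
    ∫⁻ t in Ioi a, f t < ∞ :=
  calc ∫⁻ t in Ioi a, f t ≤ ∫⁻ t in Ioc a b ∪ Ioi b, f t :=
        lintegral_mono_set fun t ht ↦ (le_or_gt t b).imp (fun htb ↦ ⟨ht, htb⟩) id
    _ ≤ (∫⁻ t in Ioc a b, f t) + ∫⁻ t in Ioi b, f t := lintegral_union_le _ _ _
    _ ≤ volume (Ioc a b) + ∫⁻ t in Ioi b, ENNReal.ofReal (C * g t) :=
        add_le_add ((lintegral_mono hf).trans_eq (setLIntegral_one _))
          (setLIntegral_mono' measurableSet_Ioi hfg)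
    _ < ∞ := ENNReal.add_lt_top.2 ⟨measure_Ioc_lt_top, (hg.const_mul C).lintegral_lt_top⟩

theorem setLIntegral_Ioi_eq_top_of_le {c : ℝ} (hab : a ≤ b) (hc : 0 < c)
    (hgm : AEStronglyMeasurable g (volume.restrict (Ioi b))) (hg0 : ∀ t ∈ Ioi b, 0 ≤ g t)
    (hg : ¬IntegrableOn g (Ioi b)) (hgf : ∀ t ∈ Ioi b, ENNReal.ofReal (c * g t) ≤ f t) :
    ∫⁻ t in Ioi a, f t = ∞ := by
  have hcg : ∫⁻ t in Ioi b, ENNReal.ofReal (c * g t) = ∞ := by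
    rw [← not_ne_iff, lintegral_ofReal_ne_top_iff_integrable (hgm.const_mul c)
      (ae_restrict_of_forall_mem measurableSet_Ioi fun t ht ↦ mul_nonneg hc.le (hg0 t ht)),
      integrable_const_mul_iff (isUnit_iff_ne_zero.2 hc.ne')]
    exact hg
  refine top_unique ?_
  calc ∞ = ∫⁻ t in Ioi b, ENNReal.ofReal (c * g t) := hcg.symm
    _ ≤ ∫⁻ t in Ioi b, f t := setLIntegral_mono' measurableSet_Ioi hgf
    _ ≤ ∫⁻ t in Ioi a, f t := lintegral_mono_set (Ioi_subset_Ioi hab)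

end SetLIntegralIoi

theorem stmt_17_general {Ω : Type*} [MeasurableSpace Ω] (μ : Measure Ω) [IsProbabilityMeasure μ]
    (X : Ω → ℝ)
    (p r : ℝ) (hr : 1 < r) (hrp : r < p)
    (htail : ∀ t : ℝ, Real.exp 1 ≤ t →
      (μ {ω | t < |X ω|}).toReal
        = ∫ x in Set.Ioi t, 1 / (x ^ (p + 1) * Real.log x ^ r)) :
    ∀ q : ℝ, 1 ≤ q → q < p →
      ((p / r < q →
          ∫⁻ t in Set.Ioi (0 : ℝ), (μ {ω | t < |X ω| ^ q}) ^ (q / p) < ⊤)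
        ∧ (q ≤ p / r →
          ∫⁻ t in Set.Ioi (0 : ℝ), (μ {ω | t < |X ω| ^ q}) ^ (q / p) = ⊤)) := by
  intro q hq _
  have hq0 : 0 < q := by linarith
  have hr0 : 0 < r := by linarith
  have hp0 : 0 < p := hr0.trans hrp
  have hf : ∀ t ∈ Ioi (exp q), (μ {ω | t < |X ω| ^ q}) ^ (q / p)
      = ENNReal.ofReal (paretoLogTail p r (t ^ q⁻¹) ^ (q / p)) := fun t ht ↦ by
    rw [measure_lt_rpow_abs_eq_ofReal_paretoLogTail htail hq0 ht.le,
      ENNReal.ofReal_rpow_of_nonneg (paretoLogTail_nonneg p r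
        ((one_le_exp zero_le_one).trans (exp_one_le_rpow_inv hq0 ht.le))) (by positivity)]
  obtain ⟨c, C, hc, hbounds⟩ := paretoLogTail_rpow_inv_rpow_bounds hp0 hq0 hr0.le
  have hg :
      IntegrableOn (fun t ↦ log t ^ (-(r * (q / p))) * t⁻¹) (Ioi (exp q)) ↔ p / r < q := by
    rw [integrableOn_Ioi_log_rpow_mul_inv_iff (one_lt_exp_iff.2 hq0), neg_lt_neg_iff,
      mul_div_assoc', one_lt_div hp0, div_lt_iff₀' hr0]
  refine ⟨fun hpq ↦ ?_, fun hpq ↦ ?_⟩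
  · refine setLIntegral_Ioi_lt_top_of_le_one C (fun t ↦ ENNReal.rpow_le_one prob_le_one
      (by positivity)) (fun t ht ↦ ?_) (hg.2 hpq)
    rw [hf t ht]
    exact ENNReal.ofReal_le_ofReal (hbounds t ht.le).2
  · refine setLIntegral_Ioi_eq_top_of_le (exp_pos q).le hc ?_ ?_ (hg.not.2 hpq.not_gt) ?_
    · exact (by have := measurable_log; fun_prop : Measurable _).aestronglyMeasurable
    · intro t ht
      have ht1 : 1 < t := (one_lt_exp_iff.2 hq0).trans ht
      exact mul_nonneg (rpow_nonneg (log_nonneg ht1.le) _) (inv_nonneg.2 (by linarith))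
    · intro t ht
      rw [hf t ht]
      exact ENNReal.ofReal_le_ofReal (hbounds t ht.le).1

theorem stmt_17 {Ω : Type*} [MeasurableSpace Ω] (μ : Measure Ω) [IsProbabilityMeasure μ]
    (X : Ω → ℝ) (hXmeas : Measurable X)
    (hsymm : IdentDistrib X (fun ω => -X ω) μ μ)
    (p r : ℝ) (hr : 1 < r) (hrp : r < p) (hp : p < 2)
    (htail : ∀ t : ℝ, Real.exp 1 ≤ t →
      (μ {ω | t < |X ω|}).toReal
        = ∫ x in Set.Ioi t, 1 / (x ^ (p + 1) * Real.log x ^ r)) :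
    ∀ q : ℝ, 1 ≤ q → q < p →
      ((p / r < q →
          ∫⁻ t in Set.Ioi (0 : ℝ), (μ {ω | t < |X ω| ^ q}) ^ (q / p) < ⊤)
        ∧ (q ≤ p / r →
          ∫⁻ t in Set.Ioi (0 : ℝ), (μ {ω | t < |X ω| ^ q}) ^ (q / p) = ⊤)) :=
  stmt_17_general μ X p r hr hrp htail
end

section
/- Let X be a real-valued random variable with P(X = −1/(1−a)) = 1 − a and P(X > x) = ∫_x^∞ dt/(t² (ln t)(ln ln t)²) for x ≥ e^e, where a = ∫_{e^e}^∞ dt/(t² (ln t)(ln ln t)²). Then E X = 0, E|X| < ∞, and for all sufficiently large n, E[X 1{|X| ≤ n}] = −1/ln ln n; consequently ∑_{n=2}^∞ |E[X 1{|X| ≤ n}]|^q / n = ∞ for every q > 1. -/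
/-!
The tail hypothesis determines the law of `X` on `(e^e, ∞)`: it has density
`f t = 1 / (t² log t (log log t)²)` there, of total mass `a < 1`, so the remaining mass `1 - a`
sits on the atom `-1/(1-a)`, which therefore contributes exactly `-1` to every truncated mean
containing it. Since `t f t` is the derivative of `-1 / log log t`, the tail contributes
`∫_{e^e}^n t f t dt = 1 - 1 / log log n`, and `1` in the limit. Hence `E X = 0` and
`E[X; |X| ≤ n] = -1 / log log n` for large `n`. Finally `1 / (n (log log n)^q) ≥ 1 / (n log n)`
eventually, and `∑ 1 / (n log n)` diverges by Cauchy condensation.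
-/

open MeasureTheory Real Set Filter Topology

lemma not_summable_one_div_mul_log : ¬ Summable fun n : ℕ => 1 / (n * log n) := by
  have hnonneg : 0 ≤ᶠ[atTop] fun n : ℕ => 1 / (n * log n) :=
    Eventually.of_forall fun n => by
      have := log_natCast_nonneg n
      simp only [Pi.zero_apply]
      positivity
  have hanti :
      ∀ᶠ n : ℕ in atTop, 1 / ((n + 1 : ℕ) * log (n + 1 : ℕ)) ≤ 1 / (n * log n) := by
    filter_upwards [eventually_ge_atTop 2] with n hn
    have hn' : (2 : ℝ) ≤ n := by exact_mod_cast hn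
    have := log_pos (by linarith : (1 : ℝ) < n)
    gcongr <;> linarith
  rw [← summable_condensed_iff_of_eventually_nonneg hnonneg hanti]
  have hcond : (fun k : ℕ => (2 : ℝ) ^ k * (1 / ((2 ^ k : ℕ) * log (2 ^ k : ℕ))))
      = fun k : ℕ => (log 2)⁻¹ * (1 / k) := by
    ext k
    rcases eq_or_ne k 0 with rfl | hk
    · simp
    · have := log_pos one_lt_two
      push_cast
      rw [log_pow]
      field_simp
  rw [hcond, summable_mul_left_iff (inv_ne_zero (log_pos one_lt_two).ne')]
  exact not_summable_one_div_natCast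

lemma not_summable_one_div_mul_log_log_rpow (q : ℝ) :
    ¬ Summable fun n : ℕ => 1 / (n * log (log n) ^ q) := by
  refine fun h => not_summable_one_div_mul_log (h.of_norm_bounded_eventually_nat ?_)
  have hlog : Tendsto (fun n : ℕ => log n) atTop atTop :=
    tendsto_log_atTop.comp tendsto_natCast_atTop_atTop
  filter_upwards [((isLittleO_log_rpow_rpow_atTop q one_pos).comp_tendsto hlog).bound one_pos,
    hlog.eventually_gt_atTop 1] with n hbound hn
  have hloglog := log_pos hn
  have hn₀ : (0 : ℝ) < n :=
    Nat.cast_pos.2 (Nat.pos_of_ne_zero (by rintro rfl; norm_num at hn))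
  simp only [Function.comp_apply, rpow_one, one_mul, norm_of_nonneg (rpow_nonneg hloglog.le q),
    norm_of_nonneg (zero_le_one.trans hn.le)] at hbound
  rw [norm_of_nonneg (by positivity)]
  gcongr

namespace MeasureTheory.Measure

lemma restrict_Ioi_eq_of_forall_Ioi {ν ρ : Measure ℝ} [IsFiniteMeasure ν] {y : ℝ}
    (h : ∀ x, y ≤ x → ν (Ioi x) = ρ (Ioi x)) :
    ν.restrict (Ioi y) = ρ.restrict (Ioi y) := by
  refine ext_of_generate_finite (range Ioi)
    (BorelSpace.measurable_eq.trans (borel_eq_generateFrom_Ioi ℝ)) isPiSystem_Ioi ?_ ?_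
  · rintro _ ⟨x, rfl⟩
    rw [restrict_apply measurableSet_Ioi, restrict_apply measurableSet_Ioi, Ioi_inter_Ioi]
    exact h _ le_sup_right
  · simpa using h y le_rfl

lemma eq_restrict_add_restrict_of_add_eq_one {α : Type*} [MeasurableSpace α] {ν : Measure α}
    [IsProbabilityMeasure ν] {s t : Set α} (hs : MeasurableSet s) (ht : MeasurableSet t)
    (hst : Disjoint s t) (h : ν s + ν t = 1) : ν = ν.restrict s + ν.restrict t := by
  rw [← restrict_union hst ht]
  refine (restrict_eq_self_of_ae_mem ?_).symm
  rw [ae_mem_iff_measure_eq (hs.union ht).nullMeasurableSet]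
  simpa [measure_union hst ht] using h

end MeasureTheory.Measure

noncomputable def loglogDensity (t : ℝ) : ℝ := 1 / (t ^ 2 * log t * log (log t) ^ 2)

lemma one_lt_exp_one : 1 < exp 1 := one_lt_exp_iff.2 one_pos

lemma exp_one_lt_exp_exp_one : exp 1 < exp (exp 1) := exp_lt_exp.2 one_lt_exp_one

lemma loglogDensity_nonneg {t : ℝ} (ht : 1 ≤ t) : 0 ≤ loglogDensity t := by
  have := log_nonneg ht
  unfold loglogDensity
  positivity

lemma measurable_loglogDensity : Measurable loglogDensity := by
  unfold loglogDensity
  fun_prop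

lemma hasDerivAt_neg_inv_log_log {t : ℝ} (ht : exp 1 < t) :
    HasDerivAt (fun s => -(log (log s))⁻¹) (t * loglogDensity t) t := by
  have ht₀ : t ≠ 0 := (exp_pos 1 |>.trans ht).ne'
  have hlog : 1 < log t := (lt_log_iff_exp_lt (exp_pos 1 |>.trans ht)).2 ht
  have hloglog : log (log t) ≠ 0 := (log_pos hlog).ne'
  refine (((hasDerivAt_log ht₀).log (by positivity)).inv hloglog).neg.congr_deriv ?_
  unfold loglogDensity
  field_simp

lemma tendsto_neg_inv_log_log_atTop : Tendsto (fun s => -(log (log s))⁻¹) atTop (𝓝 0) := by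
  simpa using (tendsto_inv_atTop_zero.comp (tendsto_log_atTop.comp tendsto_log_atTop)).neg

lemma integrableOn_mul_loglogDensity_Ioi {y : ℝ} (hy : exp 1 < y) :
    IntegrableOn (fun t => t * loglogDensity t) (Ioi y) :=
  integrableOn_Ioi_deriv_of_nonneg (hasDerivAt_neg_inv_log_log hy).continuousAt.continuousWithinAt
    (fun _ ht => hasDerivAt_neg_inv_log_log (hy.trans ht))
    (fun t ht => by
      have : 1 ≤ t := (one_lt_exp_one.trans (hy.trans ht)).le
      exact mul_nonneg (by linarith) (loglogDensity_nonneg this))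
    tendsto_neg_inv_log_log_atTop

lemma integral_mul_loglogDensity_Ioi {y : ℝ} (hy : exp 1 < y) :
    ∫ t in Ioi y, t * loglogDensity t = (log (log y))⁻¹ := by
  rw [integral_Ioi_of_hasDerivAt_of_tendsto
    (hasDerivAt_neg_inv_log_log hy).continuousAt.continuousWithinAt
    (fun _ ht => hasDerivAt_neg_inv_log_log (hy.trans ht))
    (integrableOn_mul_loglogDensity_Ioi hy) tendsto_neg_inv_log_log_atTop]
  ring

lemma integral_mul_loglogDensity_Ioc {x y : ℝ} (hy : exp 1 < y) (hyx : y ≤ x) :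
    ∫ t in Ioc y x, t * loglogDensity t = (log (log y))⁻¹ - (log (log x))⁻¹ := by
  rw [← intervalIntegral.integral_of_le hyx, intervalIntegral.integral_eq_sub_of_hasDerivAt
    (fun t ht => hasDerivAt_neg_inv_log_log (hy.trans_le (uIcc_of_le hyx ▸ ht).1))
    ((intervalIntegrable_iff_integrableOn_Ioc_of_le hyx).2
      ((integrableOn_mul_loglogDensity_Ioi hy).mono_set Ioc_subset_Ioi_self))]
  ring

lemma loglogDensity_le_inv_mul {y t : ℝ} (hy : 1 ≤ y) (ht : y ≤ t) :
    loglogDensity t ≤ y⁻¹ * (t * loglogDensity t) := by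
  have hd := loglogDensity_nonneg (hy.trans ht)
  rw [← mul_assoc]
  exact le_mul_of_one_le_left hd ((one_le_inv_mul₀ (by positivity)).2 ht)

lemma integrableOn_loglogDensity_Ioi {y : ℝ} (hy : exp 1 < y) :
    IntegrableOn loglogDensity (Ioi y) := by
  have hy₁ : 1 ≤ y := (one_lt_exp_one.trans hy).le
  refine ((integrableOn_mul_loglogDensity_Ioi hy).const_mul y⁻¹).mono'
    measurable_loglogDensity.aestronglyMeasurable ?_
  filter_upwards [ae_restrict_mem measurableSet_Ioi] with t ht
  rw [norm_of_nonneg (loglogDensity_nonneg (hy₁.trans ht.le))]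
  exact loglogDensity_le_inv_mul hy₁ ht.le

lemma integral_loglogDensity_Ioi_le {y : ℝ} (hy : exp 1 < y) :
    ∫ t in Ioi y, loglogDensity t ≤ y⁻¹ * (log (log y))⁻¹ := by
  have hy₁ : 1 ≤ y := (one_lt_exp_one.trans hy).le
  rw [← integral_mul_loglogDensity_Ioi hy, ← integral_const_mul]
  exact setIntegral_mono_on (integrableOn_loglogDensity_Ioi hy)
    ((integrableOn_mul_loglogDensity_Ioi hy).const_mul y⁻¹) measurableSet_Ioi
    fun t ht => loglogDensity_le_inv_mul hy₁ (le_of_lt ht)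

lemma integral_loglogDensity_Ioi_lt_one : ∫ t in Ioi (exp (exp 1)), loglogDensity t < 1 := by
  refine (integral_loglogDensity_Ioi_le exp_one_lt_exp_exp_one).trans_lt ?_
  simpa [log_exp] using inv_lt_one_of_one_lt₀ (one_lt_exp_one.trans exp_one_lt_exp_exp_one)

lemma integral_loglogDensity_Ioi_nonneg : 0 ≤ ∫ t in Ioi (exp (exp 1)), loglogDensity t :=
  setIntegral_nonneg measurableSet_Ioi fun _ ht =>
    loglogDensity_nonneg ((one_lt_exp_one.trans exp_one_lt_exp_exp_one).trans ht).le

noncomputable def loglogTailMeasure : Measure ℝ :=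
  (volume.restrict (Ioi (exp (exp 1)))).withDensity fun t => ENNReal.ofReal (loglogDensity t)

instance : IsFiniteMeasure loglogTailMeasure :=
  isFiniteMeasure_withDensity_ofReal (integrableOn_loglogDensity_Ioi exp_one_lt_exp_exp_one).2

lemma loglogTailMeasure_Ioi {x : ℝ} (hx : exp (exp 1) ≤ x) :
    loglogTailMeasure (Ioi x) = ENNReal.ofReal (∫ t in Ioi x, loglogDensity t) := by
  have hx₁ : 1 ≤ x := (one_lt_exp_one.trans (exp_one_lt_exp_exp_one.trans_le hx)).le
  rw [loglogTailMeasure, withDensity_apply _ measurableSet_Ioi,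
    Measure.restrict_restrict measurableSet_Ioi, Ioi_inter_Ioi, sup_eq_left.2 hx,
    ofReal_integral_eq_lintegral_ofReal
      (integrableOn_loglogDensity_Ioi (exp_one_lt_exp_exp_one.trans_le hx))]
  filter_upwards [ae_restrict_mem measurableSet_Ioi] with t ht
  exact loglogDensity_nonneg (hx₁.trans ht.le)

lemma loglogTailMeasure_restrict_Ioi :
    loglogTailMeasure.restrict (Ioi (exp (exp 1))) = loglogTailMeasure := by
  rw [loglogTailMeasure, restrict_withDensity measurableSet_Ioi,
    Measure.restrict_restrict measurableSet_Ioi, inter_self]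

lemma toReal_ofReal_loglogDensity {t : ℝ} (ht : t ∈ Ioi (exp (exp 1))) :
    (ENNReal.ofReal (loglogDensity t)).toReal = loglogDensity t :=
  ENNReal.toReal_ofReal
    (loglogDensity_nonneg ((one_lt_exp_one.trans exp_one_lt_exp_exp_one).trans ht).le)

lemma integrable_loglogTailMeasure : Integrable (fun x => x) loglogTailMeasure := by
  rw [loglogTailMeasure, integrable_withDensity_iff measurable_loglogDensity.ennreal_ofReal
    (ae_of_all _ fun _ => ENNReal.ofReal_lt_top)]
  refine (integrableOn_mul_loglogDensity_Ioi exp_one_lt_exp_exp_one).congr_fun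
    (fun t ht => ?_) measurableSet_Ioi
  rw [toReal_ofReal_loglogDensity ht]

lemma setIntegral_loglogTailMeasure {s : Set ℝ} (hs : MeasurableSet s) :
    ∫ x in s, x ∂loglogTailMeasure = ∫ t in s ∩ Ioi (exp (exp 1)), t * loglogDensity t := by
  rw [loglogTailMeasure, restrict_withDensity hs, Measure.restrict_restrict hs,
    integral_withDensity_eq_integral_toReal_smul measurable_loglogDensity.ennreal_ofReal
      (ae_of_all _ fun _ => ENNReal.ofReal_lt_top)]
  refine setIntegral_congr_fun (hs.inter measurableSet_Ioi) fun t ht => ?_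
  rw [toReal_ofReal_loglogDensity ht.2, smul_eq_mul, mul_comm]

noncomputable def loglogLaw (a : ℝ) : Measure ℝ :=
  ENNReal.ofReal (1 - a) • Measure.dirac (-(1 / (1 - a))) + loglogTailMeasure

lemma integrable_loglogLaw (a : ℝ) : Integrable (fun x => x) (loglogLaw a) :=
  ((integrable_dirac enorm_lt_top).smul_measure ENNReal.ofReal_ne_top).add_measure
    integrable_loglogTailMeasure

lemma setIntegral_loglogLaw {a : ℝ} (ha : a < 1) {s : Set ℝ} (hs : MeasurableSet s)
    (hatom : -(1 / (1 - a)) ∈ s) :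
    ∫ x in s, x ∂loglogLaw a = -1 + ∫ t in s ∩ Ioi (exp (exp 1)), t * loglogDensity t := by
  classical
  have hint := (integrable_loglogLaw a).restrict (s := s)
  rw [loglogLaw, Measure.restrict_add] at hint ⊢
  rw [integral_add_measure hint.left_of_add_measure hint.right_of_add_measure,
    Measure.restrict_smul, integral_smul_measure, setIntegral_dirac, if_pos hatom,
    setIntegral_loglogTailMeasure hs, ENNReal.toReal_ofReal (by linarith), smul_eq_mul, mul_neg,
    mul_one_div_cancel (sub_ne_zero.2 ha.ne')]

lemma integral_loglogLaw {a : ℝ} (ha : a < 1) : ∫ x, x ∂loglogLaw a = 0 := by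
  rw [← setIntegral_univ, setIntegral_loglogLaw ha MeasurableSet.univ (mem_univ _), univ_inter,
    integral_mul_loglogDensity_Ioi exp_one_lt_exp_exp_one]
  simp [log_exp]

lemma setIntegral_abs_le_loglogLaw {a n : ℝ} (ha : a < 1) (hn : exp (exp 1) ≤ n)
    (han : 1 / (1 - a) ≤ n) :
    ∫ x in {x | |x| ≤ n}, x ∂loglogLaw a = -(1 / log (log n)) := by
  have hc : 0 < 1 / (1 - a) := one_div_pos.2 (by linarith)
  have hset : {x : ℝ | |x| ≤ n} ∩ Ioi (exp (exp 1)) = Ioc (exp (exp 1)) n := by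
    ext x
    simp only [mem_inter_iff, mem_ofPred_eq, abs_le, mem_Ioi, mem_Ioc]
    constructor
    · rintro ⟨⟨-, hxn⟩, hx⟩; exact ⟨hx, hxn⟩
    · rintro ⟨hx, hxn⟩; exact ⟨⟨by linarith [exp_pos (exp 1)], hxn⟩, hx⟩
  have hmeas : MeasurableSet {x : ℝ | |x| ≤ n} := measurableSet_le (by fun_prop) (by fun_prop)
  rw [setIntegral_loglogLaw ha hmeas
    (show |-(1 / (1 - a))| ≤ n by rwa [abs_neg, abs_of_pos hc]), hset,
    integral_mul_loglogDensity_Ioc exp_one_lt_exp_exp_one hn]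
  simp only [log_exp, inv_one, one_div]
  ring

lemma map_eq_loglogLaw {Ω : Type*} [MeasurableSpace Ω] {μ : Measure Ω} [IsProbabilityMeasure μ]
    {X : Ω → ℝ} (hX : Measurable X) {a : ℝ}
    (ha : a = ∫ t in Ioi (exp (exp 1)), loglogDensity t)
    (hatom : μ {ω | X ω = -(1 / (1 - a))} = ENNReal.ofReal (1 - a))
    (htail : ∀ x, exp (exp 1) ≤ x →
      (μ {ω | x < X ω}).toReal = ∫ t in Ioi x, loglogDensity t) :
    μ.map X = loglogLaw a := by
  have ha₀ : 0 ≤ a := ha ▸ integral_loglogDensity_Ioi_nonneg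
  have ha₁ : a < 1 := ha ▸ integral_loglogDensity_Ioi_lt_one
  have := Measure.isProbabilityMeasure_map (μ := μ) hX.aemeasurable
  have hν_atom : μ.map X {-(1 / (1 - a))} = ENNReal.ofReal (1 - a) := by
    rw [Measure.map_apply hX (measurableSet_singleton _)]
    exact hatom
  have hν_tail : ∀ x, exp (exp 1) ≤ x → μ.map X (Ioi x) = loglogTailMeasure (Ioi x) := by
    intro x hx
    rw [Measure.map_apply hX measurableSet_Ioi, loglogTailMeasure_Ioi hx, ← htail x hx,
      ENNReal.ofReal_toReal (measure_ne_top _ _)]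
    rfl
  have hdisj : Disjoint {-(1 / (1 - a))} (Ioi (exp (exp 1))) := by
    rw [disjoint_singleton_left, mem_Ioi, not_lt]
    have : 0 < 1 / (1 - a) := one_div_pos.2 (by linarith)
    linarith [exp_pos (exp 1)]
  have hmass : μ.map X {-(1 / (1 - a))} + μ.map X (Ioi (exp (exp 1))) = 1 := by
    rw [hν_atom, hν_tail _ le_rfl, loglogTailMeasure_Ioi le_rfl, ← ha,
      ← ENNReal.ofReal_add (by linarith) ha₀, sub_add_cancel, ENNReal.ofReal_one]
  rw [Measure.eq_restrict_add_restrict_of_add_eq_one (measurableSet_singleton _) measurableSet_Ioi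
    hdisj hmass, Measure.restrict_singleton, hν_atom,
    Measure.restrict_Ioi_eq_of_forall_Ioi hν_tail, loglogTailMeasure_restrict_Ioi, loglogLaw]

theorem stmt_18 {Ω : Type*} [MeasurableSpace Ω] (μ : Measure Ω) [IsProbabilityMeasure μ]
    (X : Ω → ℝ) (hXmeas : Measurable X) (a : ℝ)
    (ha : a = ∫ t in Set.Ioi (Real.exp (Real.exp 1)),
      1 / (t ^ 2 * Real.log t * Real.log (Real.log t) ^ 2))
    (hatom : μ {ω | X ω = -(1 / (1 - a))} = ENNReal.ofReal (1 - a))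
    (htail : ∀ x : ℝ, Real.exp (Real.exp 1) ≤ x →
      (μ {ω | x < X ω}).toReal
        = ∫ t in Set.Ioi x, 1 / (t ^ 2 * Real.log t * Real.log (Real.log t) ^ 2)) :
    Integrable X μ ∧ (∫ ω, X ω ∂μ) = 0
      ∧ (∃ N : ℕ, ∀ n : ℕ, N ≤ n →
          (∫ ω in {ω | |X ω| ≤ (n : ℝ)}, X ω ∂μ) = -(1 / Real.log (Real.log n)))
      ∧ ∀ q : ℝ, 1 < q →
          ¬ Summable (fun n : ℕ =>
            |∫ ω in {ω | |X ω| ≤ (n : ℝ)}, X ω ∂μ| ^ q / (n : ℝ)) := by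
  have ha₁ : a < 1 := ha ▸ integral_loglogDensity_Ioi_lt_one
  have hlaw : μ.map X = loglogLaw a := map_eq_loglogLaw hXmeas ha hatom htail
  have htrunc : ∀ᶠ n : ℕ in atTop,
      ∫ ω in {ω | |X ω| ≤ (n : ℝ)}, X ω ∂μ = -(1 / log (log n)) := by
    filter_upwards [tendsto_natCast_atTop_atTop.eventually_ge_atTop (exp (exp 1)),
      tendsto_natCast_atTop_atTop.eventually_ge_atTop (1 / (1 - a))] with n hn han
    rw [← setIntegral_abs_le_loglogLaw ha₁ hn han, ← hlaw,
      setIntegral_map (f := fun x => x) (measurableSet_le (by fun_prop) (by fun_prop))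
        aestronglyMeasurable_id hXmeas.aemeasurable]
    rfl
  refine ⟨?_, ?_, htrunc.exists_forall_of_atTop, fun q _ => ?_⟩
  · exact (integrable_map_measure aestronglyMeasurable_id hXmeas.aemeasurable).1
      (hlaw ▸ integrable_loglogLaw a)
  · rw [← integral_map (f := fun x => x) hXmeas.aemeasurable aestronglyMeasurable_id, hlaw,
      integral_loglogLaw ha₁]
  · have hloglog : ∀ᶠ n : ℕ in atTop, 0 < log (log n) :=
      (tendsto_log_atTop.comp (tendsto_log_atTop.comp tendsto_natCast_atTop_atTop)).eventually
        (eventually_gt_atTop 0)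
    refine (summable_congr_atTop ?_).not.2 (not_summable_one_div_mul_log_log_rpow q)
    filter_upwards [htrunc, hloglog] with n hn hpos
    rw [hn, abs_neg, abs_of_pos (by positivity), div_rpow zero_le_one hpos.le, one_rpow, div_div,
      mul_comm]
end
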